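/- arXiv:1009.3949 — 6 statements merged into one kernel-verified Lean document; each statement's English description precedes it below -/
import Mathlib

section
/- Let n ≥ 2 be a natural number and f ∈ L²(ℝ₊ⁿ). If the contraction f ⌢_{n−1} f* vanishes almost everywhere on ℝ₊², then f = 0 almost everywhere on ℝ₊ⁿ. Consequently, if f is a nonzero mirror symmetric function in L²(ℝ₊ⁿ), then f ⌢_{n−1} f* is nonzero in L²(ℝ₊²). -/
open MeasureTheory
open scoped ENNReal

/-- Lebesgue measure on the half line `ℝ₊ = [0,∞)`. -/
noncomputable def mplus : Measure ℝ := volume.restrict (Set.Ici 0)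

/-- Lebesgue measure on `ℝ₊ⁿ`. -/
noncomputable def mpi (n : ℕ) : Measure (Fin n → ℝ) := Measure.pi fun _ => mplus

/-- The adjoint `f*(t₁,…,tₙ) = conj (f (tₙ,…,t₁))`. -/
noncomputable def adjointFn (n : ℕ) (f : (Fin n → ℝ) → ℂ) : (Fin n → ℝ) → ℂ :=
  fun t => starRingEnd ℂ (f fun i => t i.rev)

/-- The integrand appearing in the definition of the `p`-th contraction `f ⌢_p g`:
`f(t₁,…,t_{n-p},s₁,…,s_p) * g(s_p,…,s₁,t_{n-p+1},…,t_{n+m-2p})`. -/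
noncomputable def contrIntegrand (n m p : ℕ) (f : (Fin n → ℝ) → ℂ) (g : (Fin m → ℝ) → ℂ)
    (t : Fin (n + m - 2 * p) → ℝ) (s : Fin p → ℝ) : ℂ :=
  f (fun i => if _h : (i : ℕ) < n - p then
        (if h2 : (i : ℕ) < n + m - 2 * p then t ⟨(i : ℕ), h2⟩ else 0)
      else (if h3 : (i : ℕ) - (n - p) < p then s ⟨(i : ℕ) - (n - p), h3⟩ else 0)) *
  g (fun j => if _h : (j : ℕ) < p then
        (if h2 : p - 1 - (j : ℕ) < p then s ⟨p - 1 - (j : ℕ), h2⟩ else 0)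
      else (if h3 : (n - p) + ((j : ℕ) - p) < n + m - 2 * p then
          t ⟨(n - p) + ((j : ℕ) - p), h3⟩ else 0))

/-- The `p`-th contraction `f ⌢_p g` of `f ∈ L²(ℝ₊ⁿ)` and `g ∈ L²(ℝ₊ᵐ)`. -/
noncomputable def contraction (n m p : ℕ) (f : (Fin n → ℝ) → ℂ) (g : (Fin m → ℝ) → ℂ)
    (t : Fin (n + m - 2 * p) → ℝ) : ℂ :=
  ∫ s, contrIntegrand n m p f g t s ∂(mpi p)

/-!
Write `f(a, s)` with `a ∈ ℝ₊` and `s ∈ ℝ₊ⁿ⁻¹`. Then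
`(f ⌢_{n-1} f*)(a, b) = ∫ f(a, s) conj f(b, s) ds` is the Gram kernel of the slices `f(a, ·)`,
and for a set `A` of finite measure Fubini gives `∫_{A×A} f ⌢_{n-1} f* = ∫ |∫_A f(a, s) da|² ds`.
So if the contraction vanishes, then `∫_A f(a, s) da = 0` for almost every `s`, simultaneously
for the countably many intervals `A` with rational endpoints. These form a π-system generating
the Borel sets, hence `f(·, s) = 0` almost everywhere for almost every `s`.
-/

open Set MeasureTheory
open scoped ComplexConjugate

section SetIntegralUniqueness

variable {α : Type*} [MeasurableSpace α] {μ : Measure α} {C : Set (Set α)}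

theorem ae_eq_zero_of_forall_setIntegral_eq_zero_of_finiteSpanningSetsIn_real
    (hgen : ‹MeasurableSpace α› = MeasurableSpace.generateFrom C) (hC : IsPiSystem C)
    (hμ : μ.FiniteSpanningSetsIn C) {f : α → ℝ} (hfi : ∀ s ∈ C, IntegrableOn f s μ)
    (hf : ∀ s ∈ C, ∫ x in s, f x ∂μ = 0) : f =ᵐ[μ] 0 := by
  have := hμ.sigmaFinite
  have hfm : AEMeasurable f μ := by
    rw [← Measure.restrict_univ (μ := μ), ← hμ.spanning]
    exact aemeasurable_iUnion_iff.2 fun i => (hfi _ (hμ.set_mem i)).aemeasurable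
  have hfin {g : α → ℝ} {s : Set α} (hg : IntegrableOn g s μ) :
      ∫⁻ x in s, ENNReal.ofReal (g x) ∂μ ≠ ⊤ :=
    ((lintegral_mono fun x => Real.ofReal_le_enorm (g x)).trans_lt hg.2).ne
  have hpos_neg : μ.withDensity (fun x => ENNReal.ofReal (f x))
      = μ.withDensity (fun x => ENNReal.ofReal (-f x)) := by
    refine Measure.FiniteSpanningSetsIn.ext hgen hC
      { set := hμ.set, set_mem := hμ.set_mem, spanning := hμ.spanning
        finite := fun i => by
          rw [withDensity_apply']
          exact (hfin (hfi _ (hμ.set_mem i))).lt_top } fun s hs => ?_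
    have h := hf s hs
    rw [integral_eq_lintegral_pos_part_sub_lintegral_neg_part (hfi s hs), sub_eq_zero,
      ENNReal.toReal_eq_toReal_iff' (hfin (hfi s hs))
        (hfin (g := fun x => -f x) (hfi s hs).neg)] at h
    rwa [withDensity_apply', withDensity_apply']
  filter_upwards [(withDensity_eq_iff_of_sigmaFinite hfm.ennreal_ofReal
    hfm.neg.ennreal_ofReal).1 hpos_neg] with x hx
  rw [Pi.neg_apply] at hx
  rcases le_total 0 (f x) with h | h
  · rw [ENNReal.ofReal_of_nonpos (neg_nonpos.2 h), ENNReal.ofReal_eq_zero] at hx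
    exact le_antisymm hx h
  · rw [ENNReal.ofReal_of_nonpos h, eq_comm, ENNReal.ofReal_eq_zero] at hx
    exact le_antisymm h (neg_nonpos.1 hx)

theorem ae_eq_zero_of_forall_setIntegral_eq_zero_of_finiteSpanningSetsIn
    (hgen : ‹MeasurableSpace α› = MeasurableSpace.generateFrom C) (hC : IsPiSystem C)
    (hμ : μ.FiniteSpanningSetsIn C) {f : α → ℂ} (hfi : ∀ s ∈ C, IntegrableOn f s μ)
    (hf : ∀ s ∈ C, ∫ x in s, f x ∂μ = 0) : f =ᵐ[μ] 0 := by
  have hre := ae_eq_zero_of_forall_setIntegral_eq_zero_of_finiteSpanningSetsIn_real hgen hC hμ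
    (f := fun x => (f x).re) (fun s hs => (hfi s hs).re)
    (fun s hs => by simpa [hf s hs] using integral_re (hfi s hs))
  have him := ae_eq_zero_of_forall_setIntegral_eq_zero_of_finiteSpanningSetsIn_real hgen hC hμ
    (f := fun x => (f x).im) (fun s hs => (hfi s hs).im)
    (fun s hs => by simpa [hf s hs] using integral_im (hfi s hs))
  filter_upwards [hre, him] with x hx hy
  exact Complex.ext hx hy

end SetIntegralUniqueness

section Gram

variable {α β : Type*} [MeasurableSpace α] [MeasurableSpace β] {μ : Measure α} {ν : Measure β}

theorem MeasureTheory.MemLp.comp_prodMap_fst {ε : Type*} [TopologicalSpace ε] [ContinuousENorm ε]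
    {p : ENNReal} [IsFiniteMeasure μ] [SFinite ν] {F : α × β → ε} (hF : MemLp F p (μ.prod ν)) :
    MemLp (fun z : (α × α) × β => F (z.1.1, z.2)) p ((μ.prod μ).prod ν) := by
  have hfst : MeasurePreserving Prod.fst (μ.prod μ) (μ univ • μ) :=
    ⟨measurable_fst, Measure.map_fst_prod⟩
  have h := hfst.prod (MeasurePreserving.id ν)
  rw [Measure.prod_smul_left] at h
  exact (hF.smul_measure (measure_ne_top μ univ)).comp_measurePreserving h

theorem MeasureTheory.MemLp.comp_prodMap_snd {ε : Type*} [TopologicalSpace ε] [ContinuousENorm ε]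
    {p : ENNReal} [IsFiniteMeasure μ] [SFinite ν] {F : α × β → ε} (hF : MemLp F p (μ.prod ν)) :
    MemLp (fun z : (α × α) × β => F (z.1.2, z.2)) p ((μ.prod μ).prod ν) := by
  have hsnd : MeasurePreserving Prod.snd (μ.prod μ) (μ univ • μ) :=
    ⟨measurable_snd, Measure.map_snd_prod⟩
  have h := hsnd.prod (MeasurePreserving.id ν)
  rw [Measure.prod_smul_left] at h
  exact (hF.smul_measure (measure_ne_top μ univ)).comp_measurePreserving h

theorem MeasureTheory.MemLp.prod_left_ae_two [SFinite μ] [SFinite ν] {E : Type*}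
    [NormedAddCommGroup E] {F : α × β → E} (hF : MemLp F 2 (μ.prod ν)) :
    ∀ᵐ s ∂ν, MemLp (fun x => F (x, s)) 2 μ := by
  have hmeas : ∀ᵐ s ∂ν, AEStronglyMeasurable (fun x => F (x, s)) μ :=
    hF.1.prod_swap.prodMk_left
  filter_upwards [hmeas, ((memLp_two_iff_integrable_sq_norm hF.1).1 hF).prod_left_ae]
    with s hs hsq
  exact (memLp_two_iff_integrable_sq_norm hs).2 hsq

theorem ae_prod_eq_zero_of_ae_ae [SFinite μ] [SFinite ν] {E : Type*} [NormedAddCommGroup E]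
    {F : α × β → E} (hF : AEStronglyMeasurable F (μ.prod ν))
    (h : ∀ᵐ s ∂ν, ∀ᵐ x ∂μ, F (x, s) = 0) : F =ᵐ[μ.prod ν] 0 := by
  have hint : ∫⁻ z, ‖F z‖ₑ ∂(μ.prod ν) = 0 := by
    rw [lintegral_prod_symm _ hF.enorm]
    refine (lintegral_congr_ae ?_).trans lintegral_zero
    filter_upwards [h] with s hs
    exact (lintegral_congr_ae (hs.mono fun x hx => by simp [hx])).trans lintegral_zero
  filter_upwards [(lintegral_eq_zero_iff' hF.enorm).1 hint] with z hz
  simpa using hz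

theorem integral_prod_mul_conj [SFinite μ] (g : α → ℂ) :
    ∫ x, g x.1 * conj (g x.2) ∂(μ.prod μ) = ((‖∫ a, g a ∂μ‖ ^ 2 : ℝ) : ℂ) := by
  rw [integral_prod_mul g (fun b => conj (g b)), integral_conj, RCLike.mul_conj]
  push_cast
  rfl

noncomputable def gramKernel (ν : Measure β) (F : α × β → ℂ) (x : α × α) : ℂ :=
  ∫ s, F (x.1, s) * conj (F (x.2, s)) ∂ν

theorem integrable_gramKernel_integrand [IsFiniteMeasure μ] [SFinite ν] {F : α × β → ℂ}
    (hF : MemLp F 2 (μ.prod ν)) :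
    Integrable (fun z : (α × α) × β => F (z.1.1, z.2) * conj (F (z.1.2, z.2)))
      ((μ.prod μ).prod ν) :=
  hF.comp_prodMap_fst.integrable_mul hF.comp_prodMap_snd.star

theorem integral_gramKernel [IsFiniteMeasure μ] [SigmaFinite ν] {F : α × β → ℂ}
    (hF : MemLp F 2 (μ.prod ν)) :
    ∫ x, gramKernel ν F x ∂(μ.prod μ) = ∫ s, ‖∫ a, F (a, s) ∂μ‖ ^ 2 ∂ν := by
  rw [← integral_complex_ofReal]
  simp_rw [← integral_prod_mul_conj]
  exact (integral_prod _ (integrable_gramKernel_integrand hF)).symm.trans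
    (integral_prod_symm _ (integrable_gramKernel_integrand hF))

theorem ae_integral_eq_zero_of_gramKernel_ae_eq_zero [IsFiniteMeasure μ] [SigmaFinite ν]
    {F : α × β → ℂ} (hF : MemLp F 2 (μ.prod ν)) (hK : gramKernel ν F =ᵐ[μ.prod μ] 0) :
    ∀ᵐ s ∂ν, ∫ a, F (a, s) ∂μ = 0 := by
  have hint : Integrable (fun s => ‖∫ a, F (a, s) ∂μ‖ ^ 2) ν := by
    have h := (integrable_gramKernel_integrand hF).integral_prod_right.congr
      (ae_of_all _ fun s => integral_prod_mul_conj (fun a => F (a, s)))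
    simpa only [RCLike.re_to_complex, Complex.ofReal_re] using h.re
  have hzero : ∫ s, ‖∫ a, F (a, s) ∂μ‖ ^ 2 ∂ν = 0 := by
    have h := (integral_gramKernel hF).symm.trans
      ((integral_congr_ae hK).trans (integral_zero _ _))
    exact_mod_cast h
  filter_upwards [(integral_eq_zero_iff_of_nonneg (fun _ => sq_nonneg _) hint).1 hzero]
    with s hs
  simpa using hs

end Gram

theorem ae_eq_zero_of_gramKernel_ae_eq_zero {β : Type*} [MeasurableSpace β] {μ : Measure ℝ}
    [IsLocallyFiniteMeasure μ] {ν : Measure β} [SigmaFinite ν] {F : ℝ × β → ℂ}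
    (hF : MemLp F 2 (μ.prod ν)) (hK : gramKernel ν F =ᵐ[μ.prod μ] 0) :
    F =ᵐ[μ.prod ν] 0 := by
  have hfin (a b : ℚ) : IsFiniteMeasure (μ.restrict (Ioo (a : ℝ) b)) :=
    isFiniteMeasure_restrict.2 measure_Ioo_lt_top.ne
  have hIoo (a b : ℚ) : ∀ᵐ s ∂ν, ∫ x in Ioo (a : ℝ) b, F (x, s) ∂μ = 0 := by
    have := hfin a b
    refine ae_integral_eq_zero_of_gramKernel_ae_eq_zero ?_ ?_
    · rw [← Measure.restrict_univ (μ := ν), Measure.prod_restrict]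
      exact hF.restrict _
    · rw [Measure.prod_restrict]
      exact ae_restrict_of_ae hK
  have hslice : ∀ᵐ s ∂ν, ∀ᵐ x ∂μ, F (x, s) = 0 := by
    filter_upwards [ae_all_iff.2 fun a => ae_all_iff.2 (hIoo a), hF.prod_left_ae_two]
      with s hs hmem
    refine ae_eq_zero_of_forall_setIntegral_eq_zero_of_finiteSpanningSetsIn
      (BorelSpace.measurable_eq.trans Real.borel_eq_generateFrom_Ioo_rat)
      Real.isPiSystem_Ioo_rat (Real.finiteSpanningSetsInIooRat μ) ?_ ?_ <;>
      simp only [mem_iUnion, mem_singleton_iff] <;> rintro _ ⟨a, b, -, rfl⟩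
    · have := hfin a b
      exact (hmem.restrict _).integrable one_le_two
    · exact hs a b
  exact ae_prod_eq_zero_of_ae_ae hF.1 hslice

instance : IsLocallyFiniteMeasure mplus := by unfold mplus; infer_instance

instance (n : ℕ) : SigmaFinite (mpi n) := by unfold mpi; infer_instance

/-- The contraction lives on `Fin (n + n - 2 * (n - 1)) → ℝ`, which is `Fin 2 → ℝ` only up to a
propositional equality, so the pairing `(a, b) ↦ ![a, b]` is written for an arbitrary length. -/
def vecOfProd (d : ℕ) (x : ℝ × ℝ) : Fin d → ℝ := fun i => if (i : ℕ) = 0 then x.1 else x.2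

theorem measurePreserving_vecOfProd {d : ℕ} (hd : d = 2) (μ : Measure ℝ) [SigmaFinite μ] :
    MeasurePreserving (vecOfProd d) (μ.prod μ) (Measure.pi fun _ : Fin d => μ) := by
  subst hd
  convert (measurePreserving_finTwoArrow μ).symm using 1
  funext x i
  fin_cases i <;> rfl

theorem contraction_vecOfProd (k : ℕ) (f : (Fin (k + 2) → ℝ) → ℂ) (x : ℝ × ℝ) :
    contraction (k + 2) (k + 2) (k + 1) f (adjointFn (k + 2) f) (vecOfProd _ x) =
      gramKernel (mpi (k + 1)) (fun y => f (Fin.cons y.1 y.2)) x := by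
  refine integral_congr_ae (ae_of_all _ fun s => ?_)
  simp only [contrIntegrand, adjointFn]
  congr 3 <;> funext i <;> refine Fin.cases ?_ (fun j => ?_) i <;>
    simp [vecOfProd, Fin.val_rev]
  · omega
  · omega
  · omega
  · exact congrArg s (Fin.ext (Nat.sub_sub_self (Nat.lt_succ_iff.mp j.isLt)))

theorem stmt4 (n : ℕ) (hn : 2 ≤ n) (f : (Fin n → ℝ) → ℂ) (hf : MemLp f 2 (mpi n)) :
    ((contraction n n (n - 1) f (adjointFn n f) =ᵐ[mpi (n + n - 2 * (n - 1))] 0) →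
      f =ᵐ[mpi n] 0) ∧
    ((f =ᵐ[mpi n] adjointFn n f) → ¬(f =ᵐ[mpi n] 0) →
      ¬(contraction n n (n - 1) f (adjointFn n f) =ᵐ[mpi (n + n - 2 * (n - 1))] 0)) := by
  have main (hC : contraction n n (n - 1) f (adjointFn n f) =ᵐ[mpi (n + n - 2 * (n - 1))] 0) :
      f =ᵐ[mpi n] 0 := by
    obtain ⟨k, rfl⟩ : ∃ k, n = k + 2 := ⟨n - 2, by omega⟩
    let e := MeasurableEquiv.piFinSuccAbove (fun _ : Fin (k + 2) => ℝ) 0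
    have he : MeasurePreserving e (mpi (k + 2)) (mplus.prod (mpi (k + 1))) :=
      measurePreserving_piFinSuccAbove _ 0
    have hcons : f ∘ e.symm = fun y => f (Fin.cons y.1 y.2) := by
      funext y
      simp only [e, MeasurableEquiv.piFinSuccAbove_symm_apply, Fin.insertNthEquiv_zero,
        Function.comp_apply]
      rfl
    have hK : gramKernel (mpi (k + 1)) (f ∘ e.symm) =ᵐ[mplus.prod mplus] 0 := by
      have hC' :=
        (measurePreserving_vecOfProd (by omega) mplus).quasiMeasurePreserving.ae_eq_comp hC
      filter_upwards [hC'] with x hx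
      rw [hcons, ← contraction_vecOfProd]
      exact hx
    have hF := ae_eq_zero_of_gramKernel_ae_eq_zero (hf.comp_measurePreserving he.symm) hK
    have hf0 := he.quasiMeasurePreserving.ae_eq_comp hF
    simp only [Function.comp_def, MeasurableEquiv.symm_apply_apply] at hf0
    exact hf0
  exact ⟨main, fun _ hne hC => hne (main hC)⟩
end

section
/- Let n₁,…,n_r be positive integers with n = n₁+⋯+n_r even, let f_i ∈ L²(ℝ₊^{n_i}) for 1 ≤ i ≤ r, and let π be a pairing of [n] that respects the interval partition n₁⊗⋯⊗n_r. Then the pairing integral ∫_π f₁⊗⋯⊗f_r exists (the defining integrand is absolutely integrable over ℝ₊^{n/2}), and |∫_π f₁⊗⋯⊗f_r| ≤ ‖f₁‖_{L²(ℝ₊^{n₁})} ⋯ ‖f_r‖_{L²(ℝ₊^{n_r})}. -/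
open MeasureTheory
open scoped ENNReal

/-- A pairing (perfect matching) of `{0,…,N-1}`, encoded as a fixed-point-free involution;
the blocks of the pairing are the sets `{i, pair i}`. -/
structure Pairing (N : ℕ) where
  pair : Fin N → Fin N
  involutive : ∀ i, pair (pair i) = i
  fixedFree : ∀ i, pair i ≠ i

/-- A pairing is noncrossing if there are no indices `i < j < pair i < pair j`. -/
def Pairing.IsNoncrossing {N : ℕ} (P : Pairing N) : Prop :=
  ¬ ∃ i j : Fin N, i < j ∧ j < P.pair i ∧ P.pair i < P.pair j

/-- The smaller element of the block of `j`. -/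
def Pairing.leader {N : ℕ} (P : Pairing N) (j : Fin N) : {i : Fin N // i < P.pair i} :=
  if h : j < P.pair j then ⟨j, h⟩
  else ⟨P.pair j, by
    have h1 := P.involutive j
    have h2 := P.fixedFree j
    rw [h1]
    exact lt_of_le_of_ne (not_lt.mp h) h2⟩

/-- The pairing integral `∫_π F`: the integral over `ℝ₊^{N/2}` obtained from `F` by
identifying the variables `t_i = t_j` for each block `{i,j}` of the pairing. -/
noncomputable def pairingIntegral {N : ℕ} (P : Pairing N) (F : (Fin N → ℝ) → ℂ) : ℂ :=
  ∫ x : ({i : Fin N // i < P.pair i} → ℝ), F (fun j => x (P.leader j))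
    ∂(Measure.pi fun _ => mplus)

/-- Start index (0-based) of the `i`-th block of the interval partition `n₁ ⊗ ⋯ ⊗ n_r`. -/
def blockStart {r : ℕ} (nn : Fin r → ℕ) (i : Fin r) : ℕ := ∑ k ∈ Finset.Iio i, nn k

/-- `j` (0-based) lies in the `i`-th block of the interval partition `n₁ ⊗ ⋯ ⊗ n_r`. -/
def inBlock {r : ℕ} (nn : Fin r → ℕ) (i : Fin r) (j : ℕ) : Prop :=
  blockStart nn i ≤ j ∧ j < blockStart nn i + nn i

/-- The pairing respects the interval partition `n₁ ⊗ ⋯ ⊗ n_r`: no block of the pairing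
contains two elements of the same interval block. -/
def Respects {N r : ℕ} (nn : Fin r → ℕ) (P : Pairing N) : Prop :=
  ∀ j : Fin N, ∀ i : Fin r, inBlock nn i (j : ℕ) → ¬ inBlock nn i ((P.pair j : ℕ))

/-- The tensor product `f₁ ⊗ ⋯ ⊗ f_r` as a function on `ℝ₊^N`, `N = n₁ + ⋯ + n_r`. -/
noncomputable def tensorFam {r : ℕ} (nn : Fin r → ℕ)
    (f : (i : Fin r) → (Fin (nn i) → ℝ) → ℂ) (N : ℕ) (x : Fin N → ℝ) : ℂ :=
  ∏ i, f i (fun j =>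
    if h : blockStart nn i + (j : ℕ) < N then x ⟨blockStart nn i + (j : ℕ), h⟩ else 0)

/-!
After the identification of paired variables, every variable of the pairing integral occurs in
exactly two factors of `f₁ ⊗ ⋯ ⊗ f_r`, and in two different ones because the pairing respects
the interval partition. Integrate the variables out one at a time: in each step only the two
factors containing the current variable depend on it, and Cauchy–Schwarz in that variable
replaces both by their `L²` norms in it. Once every variable has been integrated, each factor
has turned into its full `L²` norm.
-/

open Measure Function Finset

section Marginal

variable {V : Type*} [DecidableEq V] {X : V → Type*} [∀ v, MeasurableSpace (X v)]
  {μ : ∀ v, Measure (X v)} {ι : Type*} [Fintype ι] [DecidableEq ι]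

theorem DependsOn.lmarginal {f : (∀ v, X v) → ℝ≥0∞} {s : Set V} (hf : DependsOn f s)
    (t : Finset V) : DependsOn (∫⋯∫⁻_t, f ∂μ) (s \ t) :=
  fun _ _ h => lintegral_congr fun y => hf.updateFinset y h

variable (μ) in
noncomputable def l2Marginal (s : Finset V) (F : (∀ v, X v) → ℝ≥0∞) (x : ∀ v, X v) : ℝ≥0∞ :=
  (∫⋯∫⁻_s, (fun z => F z ^ (2 : ℝ)) ∂μ) x ^ (2 : ℝ)⁻¹

theorem l2Marginal_empty (F : (∀ v, X v) → ℝ≥0∞) : l2Marginal μ ∅ F = F := by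
  funext x
  simp only [l2Marginal, lmarginal_empty, ENNReal.rpow_rpow_inv two_ne_zero]

theorem l2Marginal_singleton (F : (∀ v, X v) → ℝ≥0∞) (v : V) (x : ∀ v, X v) :
    l2Marginal μ {v} F x = (∫⁻ t, F (update x v t) ^ (2 : ℝ) ∂μ v) ^ (2 : ℝ)⁻¹ := by
  simp only [l2Marginal, lmarginal_singleton]

theorem dependsOn_l2Marginal {F : (∀ v, X v) → ℝ≥0∞} {s : Set V} (hF : DependsOn F s)
    (t : Finset V) : DependsOn (l2Marginal μ t F) (s \ t) := fun x y hxy => by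
  have hF2 : DependsOn (F · ^ (2 : ℝ)) s := fun x y h => by simp only [hF h]
  simp only [l2Marginal, hF2.lmarginal t hxy]

theorem lintegral_prod_update_le_prod_l2Marginal {S : ι → Finset V}
    {G : ι → (∀ v, X v) → ℝ≥0∞} (hG : ∀ i, Measurable (G i))
    (hdep : ∀ i, DependsOn (G i) (S i)) {v : V} (hv : #{i | v ∈ S i} = 2) (x : ∀ v, X v) :
    ∫⁻ t, ∏ i, G i (update x v t) ∂μ v ≤ ∏ i, l2Marginal μ (S i ∩ {v}) (G i) x := by
  obtain ⟨a, b, hab, hT⟩ := card_eq_two.mp hv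
  have hmem : ∀ i, v ∈ S i ↔ i ∈ ({a, b} : Finset ι) := fun i => by
    simpa using Finset.ext_iff.mp hT i
  have split : ∀ h : ι → ℝ≥0∞, ∏ i, h i = (∏ i ∈ univ \ {a, b}, h i) * (h a * h b) :=
    fun h => by rw [← prod_sdiff (subset_univ {a, b}), prod_pair hab]
  have hG_out : ∀ i ∈ univ \ {a, b}, ∀ t, G i (update x v t) = G i x := fun i hi t =>
    hdep i fun w hw => update_of_ne (by rintro rfl; simp_all) _ _
  have hL_out : ∀ i ∈ univ \ {a, b}, l2Marginal μ (S i ∩ {v}) (G i) x = G i x := by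
    intro i hi
    rw [inter_singleton_of_notMem (by simp_all), l2Marginal_empty]
  have hL_in : ∀ i ∈ ({a, b} : Finset ι), l2Marginal μ (S i ∩ {v}) (G i) x =
      (∫⁻ t, G i (update x v t) ^ (2 : ℝ) ∂μ v) ^ (2 : ℝ)⁻¹ := by
    intro i hi
    rw [inter_singleton_of_mem ((hmem i).mpr hi), l2Marginal_singleton]
  have hGv : ∀ i, Measurable fun t => G i (update x v t) :=
    fun i => (hG i).comp (measurable_update x)
  calc ∫⁻ t, ∏ i, G i (update x v t) ∂μ v
      = ∫⁻ t, (∏ i ∈ univ \ {a, b}, G i x) *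
          (G a (update x v t) * G b (update x v t)) ∂μ v := by
        simp_rw [split, fun t => prod_congr rfl fun i hi => hG_out i hi t]
    _ = (∏ i ∈ univ \ {a, b}, G i x) *
          ∫⁻ t, G a (update x v t) * G b (update x v t) ∂μ v :=
        lintegral_const_mul _ ((hGv a).mul (hGv b))
    _ ≤ (∏ i ∈ univ \ {a, b}, G i x) *
          ((∫⁻ t, G a (update x v t) ^ (2 : ℝ) ∂μ v) ^ (2 : ℝ)⁻¹ *
            (∫⁻ t, G b (update x v t) ^ (2 : ℝ) ∂μ v) ^ (2 : ℝ)⁻¹) := by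
        gcongr
        simpa only [one_div, Pi.mul_apply] using ENNReal.lintegral_mul_le_Lp_mul_Lq (μ v)
          Real.HolderConjugate.two_two (hGv a).aemeasurable (hGv b).aemeasurable
    _ = ∏ i, l2Marginal μ (S i ∩ {v}) (G i) x := by
        rw [split, prod_congr rfl hL_out, hL_in a (by simp), hL_in b (by simp)]

variable [∀ v, SigmaFinite (μ v)]

theorem Measurable.l2Marginal {F : (∀ v, X v) → ℝ≥0∞} (hF : Measurable F) (s : Finset V) :
    Measurable (l2Marginal μ s F) :=
  ((hF.pow_const _).lmarginal μ).pow_const _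

theorem l2Marginal_l2Marginal {F : (∀ v, X v) → ℝ≥0∞} (hF : Measurable F) {s t : Finset V}
    (hst : Disjoint s t) : l2Marginal μ s (l2Marginal μ t F) = l2Marginal μ (s ∪ t) F := by
  funext x
  simp only [l2Marginal, ENNReal.rpow_inv_rpow two_ne_zero]
  rw [lmarginal_union μ _ (hF.pow_const _) hst]

theorem lmarginal_prod_le_prod_l2Marginal (D : Finset V) {S : ι → Finset V}
    {G : ι → (∀ v, X v) → ℝ≥0∞} (hG : ∀ i, Measurable (G i))
    (hdep : ∀ i, DependsOn (G i) (S i)) (hSD : ∀ i, S i ⊆ D)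
    (hcard : ∀ v ∈ D, #{i | v ∈ S i} = 2) :
    ∫⋯∫⁻_D, (fun x => ∏ i, G i x) ∂μ ≤ fun x => ∏ i, l2Marginal μ (S i) (G i) x := by
  induction D using Finset.induction_on generalizing S G with
  | empty =>
    simp only [lmarginal_empty, fun i => subset_empty.mp (hSD i), l2Marginal_empty]
    rfl
  | insert v D hv ih =>
    have hS' : ∀ i, S i \ {v} ⊆ D := fun i w hw => by
      have := hSD i (mem_sdiff.mp hw).1
      simp_all
    have hcard' : ∀ w ∈ D, #{i | w ∈ S i \ {v}} = 2 := fun w hw => by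
      have hwv : w ≠ v := by rintro rfl; exact hv hw
      simpa [hwv] using hcard w (mem_insert_of_mem hw)
    have hdep' : ∀ i, DependsOn (l2Marginal μ (S i ∩ {v}) (G i)) (S i \ {v} : Finset V) :=
      fun i => (dependsOn_l2Marginal (hdep i) _).mono fun w hw => by simp_all
    calc ∫⋯∫⁻_insert v D, (fun x => ∏ i, G i x) ∂μ
        = ∫⋯∫⁻_D, (fun x => ∫⁻ t, ∏ i, G i (update x v t) ∂μ v) ∂μ :=
          lmarginal_insert' _ (Finset.measurable_prod _ fun i _ => hG i) hv
      _ ≤ ∫⋯∫⁻_D, (fun x => ∏ i, l2Marginal μ (S i ∩ {v}) (G i) x) ∂μ :=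
          lmarginal_mono fun x => lintegral_prod_update_le_prod_l2Marginal hG hdep
            (hcard v (mem_insert_self v D)) x
      _ ≤ fun x => ∏ i, l2Marginal μ (S i \ {v}) (l2Marginal μ (S i ∩ {v}) (G i)) x :=
          ih (fun i => (hG i).l2Marginal _) hdep' hS' hcard'
      _ = fun x => ∏ i, l2Marginal μ (S i) (G i) x := by
          simp only [l2Marginal_l2Marginal (hG _) (disjoint_sdiff_inter _ _), sdiff_union_inter]

variable {κ : Type*} [Fintype κ] [DecidableEq κ] {σ : κ → V}

theorem lmarginal_image_univ_comp (hσ : Injective σ) {h : (∀ k, X (σ k)) → ℝ≥0∞}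
    (hh : Measurable h) :
    ∫⋯∫⁻_univ.image σ, (fun x => h fun k => x (σ k)) ∂μ =
      fun _ => ∫⁻ y, h y ∂Measure.pi fun k => μ (σ k) := by
  funext x
  rw [lintegral_eq_lmarginal_univ fun k => x (σ k)]
  exact lmarginal_image hσ univ hh x

theorem quasiMeasurePreserving_pi_comp [Fintype V] (hσ : Injective σ) :
    QuasiMeasurePreserving (fun x k => x (σ k)) (Measure.pi μ) (Measure.pi fun k => μ (σ k)) := by
  have hmeas : Measurable fun (x : ∀ v, X v) k => x (σ k) :=
    measurable_pi_lambda _ fun k => measurable_pi_apply (σ k)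
  refine ⟨hmeas, AbsolutelyContinuous.mk fun s hs hs0 => ?_⟩
  rw [Measure.map_apply hmeas hs]
  rcases isEmpty_or_nonempty (∀ v, X v) with hX | ⟨⟨x₀⟩⟩
  · rw [Set.eq_empty_of_isEmpty (_ ⁻¹' s), measure_empty]
  -- Tonelli: integrated first over the coordinates in `range σ`, the indicator already vanishes.
  have hind : Measurable (s.indicator (1 : (∀ k, X (σ k)) → ℝ≥0∞)) :=
    measurable_one.indicator hs
  have hinner : ∫⋯∫⁻_univ.image σ, (fun x => s.indicator 1 fun k => x (σ k)) ∂μ = 0 := by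
    rw [lmarginal_image_univ_comp hσ hind, lintegral_indicator_one hs, hs0]
    rfl
  have hpre : ((fun x k => x (σ k)) ⁻¹' s).indicator (1 : (∀ v, X v) → ℝ≥0∞) =
      fun x => s.indicator 1 fun k => x (σ k) := rfl
  rw [← lintegral_indicator_one (hmeas hs), lintegral_eq_lmarginal_univ x₀, hpre,
    ← sdiff_union_of_subset (subset_univ (univ.image σ)),
    lmarginal_union μ (fun x => s.indicator 1 fun k => x (σ k)) (hind.comp hmeas) sdiff_disjoint,
    hinner]
  simp [lmarginal]

end Marginal

section SharedVariables

variable {α : Type*} [MeasurableSpace α] {ν : Measure α} [SigmaFinite ν]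
  {V : Type*} [Fintype V] [DecidableEq V] {ι : Type*} [Fintype ι] [DecidableEq ι]
  {κ : ι → Type*} [∀ i, Fintype (κ i)] [∀ i, DecidableEq (κ i)]
  {E : Type*} [NormedCommRing E] [NormOneClass E] {σ : ∀ i, κ i → V}

theorem lintegral_enorm_prod_comp_le (hσ : ∀ i, Injective (σ i))
    (hcard : ∀ v, #{i | v ∈ univ.image (σ i)} = 2) {f : ∀ i, (κ i → α) → E}
    (hf : ∀ i, AEStronglyMeasurable (f i) (Measure.pi fun _ => ν)) :
    ∫⁻ x, ‖∏ i, f i fun k => x (σ i k)‖ₑ ∂Measure.pi (fun _ : V => ν) ≤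
      ∏ i, eLpNorm (f i) 2 (Measure.pi fun _ => ν) := by
  rcases isEmpty_or_nonempty (V → α) with hV | ⟨⟨x₀⟩⟩
  · simp [lintegral_of_isEmpty]
  set g := fun i => (hf i).mk (f i)
  have hfg : ∀ i, (fun x : V → α => f i fun k => x (σ i k)) =ᵐ[Measure.pi fun _ => ν]
      fun x => g i fun k => x (σ i k) :=
    fun i => (quasiMeasurePreserving_pi_comp (hσ i)).ae_eq_comp (hf i).ae_eq_mk
  set G := fun i (x : V → α) => ‖g i fun k => x (σ i k)‖ₑ
  have hG : ∀ i, Measurable (G i) := fun i =>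
    ((hf i).stronglyMeasurable_mk.comp_measurable
      (measurable_pi_lambda _ fun k => measurable_pi_apply _)).enorm
  have hdep : ∀ i, DependsOn (G i) (univ.image (σ i) : Finset V) := fun i x y h => by
    simp only [G]
    congr 2
    funext k
    exact h _ (by simp)
  have hnorm : ∀ i x, l2Marginal (fun _ => ν) (univ.image (σ i)) (G i) x =
      eLpNorm (f i) 2 (Measure.pi fun _ => ν) := fun i x => by
    have hsq := lmarginal_image_univ_comp (μ := fun _ => ν) (hσ i)
      ((hf i).stronglyMeasurable_mk.enorm.pow_const (2 : ℝ))
    rw [l2Marginal, hsq, eLpNorm_congr_ae (hf i).ae_eq_mk,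
      eLpNorm_eq_lintegral_rpow_enorm_toReal two_ne_zero ENNReal.ofNat_ne_top]
    simp [one_div]
  calc ∫⁻ x, ‖∏ i, f i fun k => x (σ i k)‖ₑ ∂Measure.pi (fun _ : V => ν)
      = ∫⁻ x, ‖∏ i, g i fun k => x (σ i k)‖ₑ ∂Measure.pi (fun _ : V => ν) :=
        lintegral_congr_ae <| by
          filter_upwards [ae_all_iff.2 hfg] with x hx
          simp only [hx]
    _ ≤ ∫⁻ x, ∏ i, G i x ∂Measure.pi (fun _ : V => ν) := lintegral_mono fun x => by
        simp only [G, enorm_eq_nnnorm]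
        exact_mod_cast Finset.nnnorm_prod_le _ _
    _ = (∫⋯∫⁻_univ, (fun x => ∏ i, G i x) ∂fun _ => ν) x₀ := lintegral_eq_lmarginal_univ x₀
    _ ≤ ∏ i, l2Marginal (fun _ => ν) (univ.image (σ i)) (G i) x₀ :=
        lmarginal_prod_le_prod_l2Marginal univ hG hdep (fun _ => subset_univ _)
          (fun v _ => hcard v) x₀
    _ = ∏ i, eLpNorm (f i) 2 (Measure.pi fun _ => ν) := by simp only [hnorm]

theorem integrable_prod_comp (hσ : ∀ i, Injective (σ i))
    (hcard : ∀ v, #{i | v ∈ univ.image (σ i)} = 2) {f : ∀ i, (κ i → α) → E}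
    (hf : ∀ i, MemLp (f i) 2 (Measure.pi fun _ => ν)) :
    Integrable (fun x : V → α => ∏ i, f i fun k => x (σ i k)) (Measure.pi fun _ => ν) :=
  ⟨Finset.aestronglyMeasurable_fun_prod _ fun i _ =>
      (hf i).1.comp_quasiMeasurePreserving (quasiMeasurePreserving_pi_comp (hσ i)),
    (lintegral_enorm_prod_comp_le hσ hcard fun i => (hf i).1).trans_lt
      (ENNReal.prod_lt_top fun i _ => (hf i).eLpNorm_lt_top)⟩

end SharedVariables

instance : SigmaFinite mplus := inferInstanceAs (SigmaFinite (volume.restrict _))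

section IntervalPartition

variable {r : ℕ} (nn : Fin r → ℕ)

theorem blockStart_eq_sum_castLE (i : Fin r) :
    blockStart nn i = ∑ k : Fin i, nn (Fin.castLE i.2.le k) := by
  have hIio : univ.map (Fin.castLEEmb i.2.le) = Iio i := by
    ext k
    simp only [mem_map, mem_univ, true_and, mem_Iio, Fin.castLEEmb_apply]
    exact ⟨by rintro ⟨k, rfl⟩; exact Fin.lt_def.2 k.2, fun h => ⟨⟨k, h⟩, rfl⟩⟩
  rw [blockStart, ← hIio, sum_map]
  rfl

theorem finSigmaFinEquiv_val_eq_blockStart_add (i : Fin r) (j : Fin (nn i)) :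
    (finSigmaFinEquiv ⟨i, j⟩ : ℕ) = blockStart nn i + j := by
  rw [finSigmaFinEquiv_apply, blockStart_eq_sum_castLE]

def blockOf (q : Fin (∑ i, nn i)) : Fin r := (finSigmaFinEquiv.symm q).1

theorem exists_finSigmaFinEquiv_eq_iff (i : Fin r) (q : Fin (∑ i, nn i)) :
    (∃ j, finSigmaFinEquiv ⟨i, j⟩ = q) ↔ blockOf nn q = i := by
  obtain ⟨⟨i', j⟩, rfl⟩ := finSigmaFinEquiv.surjective q
  simp only [blockOf, Equiv.symm_apply_apply, EmbeddingLike.apply_eq_iff_eq]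
  constructor
  · rintro ⟨j', h⟩
    exact (congrArg Sigma.fst h).symm
  · rintro rfl
    exact ⟨j, rfl⟩

theorem inBlock_iff_blockOf_eq (i : Fin r) (q : Fin (∑ i, nn i)) :
    inBlock nn i q ↔ blockOf nn q = i := by
  rw [← exists_finSigmaFinEquiv_eq_iff]
  constructor
  · rintro ⟨h₁, h₂⟩
    refine ⟨⟨q - blockStart nn i, by omega⟩, Fin.ext ?_⟩
    rw [finSigmaFinEquiv_val_eq_blockStart_add]
    dsimp only
    omega
  · rintro ⟨j, rfl⟩
    rw [inBlock, finSigmaFinEquiv_val_eq_blockStart_add]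
    omega

variable {nn} in
theorem Respects.blockOf_pair_ne {P : Pairing (∑ i, nn i)} (hP : Respects nn P)
    (q : Fin (∑ i, nn i)) : blockOf nn (P.pair q) ≠ blockOf nn q := fun h =>
  hP q _ ((inBlock_iff_blockOf_eq nn _ q).2 rfl) ((inBlock_iff_blockOf_eq nn _ _).2 h)

end IntervalPartition

namespace Pairing

variable {N : ℕ} (P : Pairing N)

theorem leader_val (v : {i : Fin N // i < P.pair i}) : P.leader v.1 = v := by
  rw [leader, dif_pos v.2]

theorem leader_pair (q : Fin N) : P.leader (P.pair q) = P.leader q := by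
  unfold leader
  by_cases h : q < P.pair q
  · rw [dif_pos h, dif_neg (by rw [P.involutive q]; exact not_lt.mpr h.le)]
    exact Subtype.ext (P.involutive q)
  · have h' : P.pair q < q := lt_of_le_of_ne (not_lt.mp h) (P.fixedFree q)
    rw [dif_neg h, dif_pos (by rw [P.involutive q]; exact h')]

theorem leader_val_eq_or (q : Fin N) :
    (P.leader q : Fin N) = q ∨ (P.leader q : Fin N) = P.pair q := by
  unfold leader
  split_ifs
  exacts [Or.inl rfl, Or.inr rfl]

theorem leader_eq_iff {q : Fin N} {v : {i : Fin N // i < P.pair i}} :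
    P.leader q = v ↔ q = v.1 ∨ q = P.pair v.1 := by
  constructor
  · rintro rfl
    rcases P.leader_val_eq_or q with h | h
    · exact Or.inl h.symm
    · exact Or.inr (by rw [h, P.involutive])
  · rintro (rfl | rfl)
    · exact P.leader_val v
    · rw [P.leader_pair, P.leader_val]

theorem leader_eq_leader_iff {q q' : Fin N} :
    P.leader q = P.leader q' ↔ q = q' ∨ q = P.pair q' := by
  rw [leader_eq_iff]
  rcases P.leader_val_eq_or q' with h | h <;> rw [h]
  rw [P.involutive, or_comm]

end Pairing

section PairedCoordinates

variable {r : ℕ} (nn : Fin r → ℕ) (P : Pairing (∑ i, nn i))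

/-- The variable of the pairing integral that the `j`-th argument of `fᵢ` is identified with. -/
def pairedCoord (i : Fin r) (j : Fin (nn i)) : {q // q < P.pair q} :=
  P.leader (finSigmaFinEquiv ⟨i, j⟩)

theorem blockOf_finSigmaFinEquiv (i : Fin r) (j : Fin (nn i)) :
    blockOf nn (finSigmaFinEquiv ⟨i, j⟩) = i := by
  simp [blockOf]

variable {nn P}

theorem pairedCoord_injective (hP : Respects nn P) (i : Fin r) :
    Injective (pairedCoord nn P i) := fun j j' h => by
  rcases P.leader_eq_leader_iff.1 h with h | h
  · exact eq_of_heq (Sigma.mk.inj_iff.1 (finSigmaFinEquiv.injective h)).2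
  · refine absurd ?_ (hP.blockOf_pair_ne (finSigmaFinEquiv ⟨i, j'⟩))
    rw [← h, blockOf_finSigmaFinEquiv, blockOf_finSigmaFinEquiv]

theorem mem_image_pairedCoord_iff (i : Fin r) (v : {q // q < P.pair q}) :
    v ∈ univ.image (pairedCoord nn P i) ↔ blockOf nn v.1 = i ∨ blockOf nn (P.pair v.1) = i := by
  simp only [mem_image, mem_univ, true_and, pairedCoord, Pairing.leader_eq_iff, exists_or,
    exists_finSigmaFinEquiv_eq_iff]

theorem card_filter_mem_image_pairedCoord (hP : Respects nn P) (v : {q // q < P.pair q}) :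
    #{i | v ∈ univ.image (pairedCoord nn P i)} = 2 := by
  have hfilter : ({i | v ∈ univ.image (pairedCoord nn P i)} : Finset (Fin r)) =
      {blockOf nn v.1, blockOf nn (P.pair v.1)} := by
    ext i
    simp only [mem_filter, mem_univ, true_and, mem_image_pairedCoord_iff, mem_insert,
      mem_singleton, eq_comm]
  rw [hfilter, card_pair (hP.blockOf_pair_ne v.1).symm]

theorem tensorFam_comp_leader (f : (i : Fin r) → (Fin (nn i) → ℝ) → ℂ)
    (x : {q // q < P.pair q} → ℝ) :
    tensorFam nn f (∑ i, nn i) (fun q => x (P.leader q)) =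
      ∏ i, f i fun j => x (pairedCoord nn P i j) := by
  refine prod_congr rfl fun i _ => congrArg (f i) (funext fun j => ?_)
  have hval := finSigmaFinEquiv_val_eq_blockStart_add nn i j
  rw [dif_pos (hval ▸ (finSigmaFinEquiv ⟨i, j⟩).isLt)]
  exact congrArg _ (congrArg P.leader (Fin.ext hval.symm))

end PairedCoordinates

theorem stmt5_general (r : ℕ) (nn : Fin r → ℕ)
    (f : (i : Fin r) → (Fin (nn i) → ℝ) → ℂ)
    (hf : ∀ i, MemLp (f i) 2 (Measure.pi fun _ : Fin (nn i) => mplus))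
    (P : Pairing (∑ i, nn i)) (hP : Respects nn P) :
    Integrable (fun x : ({i : Fin (∑ i, nn i) // i < P.pair i} → ℝ) =>
        tensorFam nn f (∑ i, nn i) (fun j => x (P.leader j)))
      (Measure.pi fun _ => mplus) ∧
    (‖pairingIntegral P (tensorFam nn f (∑ i, nn i))‖₊ : ℝ≥0∞) ≤
      ∏ i, eLpNorm (f i) 2 (Measure.pi fun _ : Fin (nn i) => mplus) := by
  have hσ := pairedCoord_injective hP
  have hcard := card_filter_mem_image_pairedCoord hP
  simp only [pairingIntegral, tensorFam_comp_leader]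
  exact ⟨integrable_prod_comp hσ hcard hf, (enorm_integral_le_lintegral_enorm _).trans
    (lintegral_enorm_prod_comp_le hσ hcard fun i => (hf i).1)⟩

theorem stmt5 (r : ℕ) (nn : Fin r → ℕ) (hnn : ∀ i, 1 ≤ nn i)
    (f : (i : Fin r) → (Fin (nn i) → ℝ) → ℂ)
    (hf : ∀ i, MemLp (f i) 2 (Measure.pi fun _ : Fin (nn i) => mplus))
    (P : Pairing (∑ i, nn i)) (hP : Respects nn P) :
    Integrable (fun x : ({i : Fin (∑ i, nn i) // i < P.pair i} → ℝ) =>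
        tensorFam nn f (∑ i, nn i) (fun j => x (P.leader j)))
      (Measure.pi fun _ => mplus) ∧
    (‖pairingIntegral P (tensorFam nn f (∑ i, nn i))‖₊ : ℝ≥0∞) ≤
      ∏ i, eLpNorm (f i) 2 (Measure.pi fun _ : Fin (nn i) => mplus) :=
  stmt5_general r nn f hf P hP
end

section
/- Let n₁,…,n_r be positive integers and let π ∈ NC₂(n₁⊗⋯⊗n_r) be a noncrossing pairing respecting the interval partition n₁⊗⋯⊗n_r. Then there is a unique sequence of natural numbers (p₁,…,p_{r−1}) such that the composition of partial pairings τ_{p_{r−1}}∘⋯∘τ_{p₁} is defined and equals π. -/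
/-- Start index (0-based) of the `i`-th block of the interval partition given by `nn`. -/
def blockStartL (nn : List ℕ) (i : ℕ) : ℕ := (nn.take i).sum

/-- `j` (0-based) lies in the `i`-th block of the interval partition given by `nn`. -/
def inBlockL (nn : List ℕ) (i j : ℕ) : Prop :=
  i < nn.length ∧ blockStartL nn i ≤ j ∧ j < blockStartL nn i + nn.getD i 0

/-- The pairing respects the interval partition: no block of the pairing contains two
elements of the same interval block. -/
def RespectsL (nn : List ℕ) {N : ℕ} (P : Pairing N) : Prop :=
  ∀ j : Fin N, ∀ i : ℕ, inBlockL nn i (j : ℕ) → ¬ inBlockL nn i ((P.pair j : ℕ))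

/-- One step of the action of the partial pairing `τ_p`.  The state consists of the list `L` of
currently unpaired indices (in the order of the merged first block), the list of pairs produced
so far, and the start position of the next block.  The step takes the next block (of size `mp.1`)
and pairs its first `mp.2` elements with the last `mp.2` elements of `L` in nested fashion. -/
def tauStep (st : List ℕ × List (ℕ × ℕ) × ℕ) (mp : ℕ × ℕ) : List ℕ × List (ℕ × ℕ) × ℕ :=
  (st.1.take (st.1.length - mp.2) ++ (List.range' st.2.2 mp.1).drop mp.2,
   st.2.1 ++ (st.1.drop (st.1.length - mp.2)).reverse.zip ((List.range' st.2.2 mp.1).take mp.2),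
   st.2.2 + mp.1)

/-- Run the composition `τ_{p_{r-1}} ∘ ⋯ ∘ τ_{p_1}`, where the first block has size `n0` and
`steps` is the list of pairs `(n_{k+1}, p_k)`. -/
def tauRun (n0 : ℕ) (steps : List (ℕ × ℕ)) : List ℕ × List (ℕ × ℕ) × ℕ :=
  steps.foldl tauStep (List.range n0, [], n0)

/-- The composition of partial pairings is defined: at each step, `p_k` is at most the minimum
of the sizes of the two blocks it acts on. -/
def tauDefinedAux : ℕ → List (ℕ × ℕ) → Prop
  | _, [] => True
  | len, (m, p) :: rest => p ≤ len ∧ p ≤ m ∧ tauDefinedAux (len - p + (m - p)) rest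

/-- The pairing determined by the composition of partial pairings equals `P`. -/
def TauEqualsPairing (n0 : ℕ) (steps : List (ℕ × ℕ)) {N : ℕ} (P : Pairing N) : Prop :=
  ∀ i : Fin N, ((i : ℕ), (P.pair i : ℕ)) ∈ (tauRun n0 steps).2.1 ∨
    ((P.pair i : ℕ), (i : ℕ)) ∈ (tauRun n0 steps).2.1


/-!
Extend the pairing to the involution `f = P.extend` of `ℕ`. After the blocks in front of
position `s` have been processed, the unpaired indices are `openIndices f s`, the `x < s` with
`s ≤ f x`, in increasing order. In the next block `[s, s + m)` call `x` a closer if `f x < x`;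
respect gives `f x < s` then. Noncrossing forces the closers to be an initial segment of the block
whose partners are the last open indices in reverse order, so `τ_p` with `p` the number of
closers produces exactly the pairs of `P` ending in the block and leaves `openIndices f (s + m)`
open. Conversely, in any run the pairs ending in block `k` are produced at step `k` and end in the
first `p_k` elements of the block, so if the run yields `P` then `p_k` is the number of closers.
-/

open Function

theorem List.filter_append_filter_not_of_pairwise {α : Type*} {p : α → Bool} {l : List α}
    (h : l.Pairwise fun a b => p b → p a) : l.filter p ++ l.filter (fun a => !p a) = l := by
  induction l with
  | nil => rfl
  | cons a l ih =>
    rw [List.pairwise_cons] at h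
    by_cases ha : p a
    · simp [ha, ih h.2]
    · have hl : ∀ b ∈ l, ¬ p b := fun b hb => mt (h.1 b hb) ha
      rw [List.filter_cons_of_neg ha, List.filter_cons_of_pos (by simpa using ha),
        List.filter_eq_nil_iff.2 hl, List.filter_eq_self.2 (by simpa using hl), List.nil_append]

theorem List.take_length_filter_of_pairwise {α : Type*} {p : α → Bool} {l : List α}
    (h : l.Pairwise fun a b => p b → p a) : l.take (l.filter p).length = l.filter p := by
  conv_lhs => enter [2]; rw [← List.filter_append_filter_not_of_pairwise h]
  exact List.take_left' rfl

theorem List.drop_length_filter_of_pairwise {α : Type*} {p : α → Bool} {l : List α}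
    (h : l.Pairwise fun a b => p b → p a) :
    l.drop (l.filter p).length = l.filter (fun a => !p a) := by
  conv_lhs => enter [2]; rw [← List.filter_append_filter_not_of_pairwise h]
  exact List.drop_left' rfl

def Noncrossing (f : ℕ → ℕ) : Prop := ∀ ⦃i j : ℕ⦄, i < j → j < f i → ¬ f i < f j

def RespectsBlocks (f : ℕ → ℕ) : ℕ → List ℕ → Prop
  | _, [] => True
  | s, m :: rest =>
    (∀ x, s ≤ x → x < s + m → f x < s ∨ s + m ≤ f x) ∧ RespectsBlocks f (s + m) rest

def openIndices (f : ℕ → ℕ) (s : ℕ) : List ℕ := (List.range s).filter (fun x => s ≤ f x)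

def closers (f : ℕ → ℕ) (s m : ℕ) : List ℕ := (List.range' s m).filter (fun x => f x < x)

def closerCounts (f : ℕ → ℕ) : ℕ → List ℕ → List ℕ
  | _, [] => []
  | s, m :: rest => (closers f s m).length :: closerCounts f (s + m) rest

theorem respectsBlocks_of_forall {f : ℕ → ℕ} : ∀ (nn : List ℕ) (s : ℕ),
    (∀ k < nn.length, ∀ x, s + (nn.take k).sum ≤ x → x < s + (nn.take (k + 1)).sum →
      f x < s + (nn.take k).sum ∨ s + (nn.take (k + 1)).sum ≤ f x) → RespectsBlocks f s nn
  | [], _, _ => trivial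
  | m :: rest, s, h =>
    ⟨fun x h1 h2 => by simpa using h 0 (by simp) x (by simpa using h1) (by simpa using h2),
      respectsBlocks_of_forall rest (s + m) fun k hk x h1 h2 => by
        simpa [add_assoc] using h (k + 1) (by simpa using hk) x (by simpa [add_assoc] using h1)
          (by simpa [add_assoc] using h2)⟩

namespace Pairing

variable {N : ℕ} (P : Pairing N)

def extend (x : ℕ) : ℕ := if h : x < N then P.pair ⟨x, h⟩ else x

theorem extend_val (i : Fin N) : P.extend i = P.pair i := dif_pos i.2

theorem extend_ne (i : Fin N) : P.extend i ≠ i := by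
  rw [extend_val]
  exact fun h => P.fixedFree i (Fin.ext h)

theorem involutive_extend : Involutive P.extend := by
  intro x
  by_cases h : x < N
  · obtain ⟨i, rfl⟩ : ∃ i : Fin N, (i : ℕ) = x := ⟨⟨x, h⟩, rfl⟩
    rw [extend_val, extend_val, P.involutive]
  · simp [extend, h]

theorem IsNoncrossing.noncrossing_extend {P : Pairing N} (hnc : P.IsNoncrossing) :
    Noncrossing P.extend := by
  intro i j hij hji hfij
  have hi : i < N := by
    by_contra h
    simp only [extend, h, dite_false] at hji
    omega
  obtain ⟨i, rfl⟩ : ∃ i' : Fin N, (i' : ℕ) = i := ⟨⟨i, hi⟩, rfl⟩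
  rw [extend_val] at hji hfij
  obtain ⟨j, rfl⟩ : ∃ j' : Fin N, (j' : ℕ) = j := ⟨⟨j, hji.trans (P.pair i).2⟩, rfl⟩
  rw [extend_val] at hfij
  exact hnc ⟨i, j, hij, hji, hfij⟩

end Pairing

theorem RespectsL.respectsBlocks_extend {nn : List ℕ} {P : Pairing nn.sum}
    (h : RespectsL nn P) : RespectsBlocks P.extend 0 nn := by
  refine respectsBlocks_of_forall nn 0 fun k hk x h1 h2 => ?_
  rw [zero_add] at h1 h2 ⊢
  rw [List.sum_take_succ _ _ hk] at h2 ⊢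
  have hxN : x < nn.sum := by
    have := List.sum_take_add_sum_drop nn (k + 1)
    rw [List.sum_take_succ _ _ hk] at this
    omega
  have hx := h ⟨x, hxN⟩ k ⟨hk, h1, by rwa [List.getD_eq_getElem _ _ hk]⟩
  simp only [inBlockL, blockStartL, List.getD_eq_getElem _ _ hk, ← P.extend_val] at hx
  omega

section Block

variable {f : ℕ → ℕ} {s m : ℕ}

theorem mem_openIndices {x : ℕ} : x ∈ openIndices f s ↔ x < s ∧ s ≤ f x := by
  simp [openIndices]

theorem mem_closers {x : ℕ} : x ∈ closers f s m ↔ (s ≤ x ∧ x < s + m) ∧ f x < x := by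
  simp [closers]

theorem closers_add (k : ℕ) : closers f s (m + k) = closers f s m ++ closers f (s + m) k := by
  simp only [closers, ← List.range'_append, one_mul, List.filter_append]

theorem length_closerCounts :
    ∀ (rest : List ℕ) (s : ℕ), (closerCounts f s rest).length = rest.length
  | [], _ => rfl
  | m :: rest, s => by simp [closerCounts, length_closerCounts rest]

theorem pairwise_range'_closer (hf : Involutive f) (hnc : Noncrossing f)
    (hblock : ∀ x, s ≤ x → x < s + m → f x < s ∨ s + m ≤ f x) :
    (List.range' s m).Pairwise fun a b => decide (f b < b) → decide (f a < a) := by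
  refine (List.pairwise_lt_range' 1).imp_of_mem fun {a b} ha hb hab => ?_
  simp only [List.mem_range'_1] at ha hb
  simp only [decide_eq_true_eq]
  intro hfb
  by_contra hfa
  have ha' := hblock a ha.1 ha.2
  have hb' := hblock b hb.1 hb.2
  exact hnc (i := f b) (j := a) (by omega) (by rw [hf b]; omega) (by rw [hf b]; omega)

theorem take_length_closers (hf : Involutive f) (hnc : Noncrossing f)
    (hblock : ∀ x, s ≤ x → x < s + m → f x < s ∨ s + m ≤ f x) :
    (List.range' s m).take (closers f s m).length = closers f s m :=
  List.take_length_filter_of_pairwise (pairwise_range'_closer hf hnc hblock)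

theorem drop_length_closers (hf : Involutive f) (hnc : Noncrossing f)
    (hblock : ∀ x, s ≤ x → x < s + m → f x < s ∨ s + m ≤ f x) :
    (List.range' s m).drop (closers f s m).length
      = (List.range' s m).filter (fun x => s + m ≤ f x) := by
  rw [closers, List.drop_length_filter_of_pairwise (pairwise_range'_closer hf hnc hblock)]
  refine List.filter_congr fun x hx => ?_
  rw [List.mem_range'_1] at hx
  have := hblock x hx.1 hx.2
  by_cases h : f x < x <;> simp only [h, decide_true, decide_false, Bool.not_true,
    Bool.not_false, Bool.false_eq, Bool.true_eq, decide_eq_true_eq, decide_eq_false_iff_not]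
    <;> omega

theorem pairwise_openIndices_partner (hnc : Noncrossing f) :
    (openIndices f s).Pairwise fun a b => decide (s + m ≤ f b) → decide (s + m ≤ f a) := by
  refine (List.pairwise_lt_range.filter _).imp_of_mem fun {a b} ha hb hab => ?_
  rw [mem_openIndices] at ha hb
  simp only [decide_eq_true_eq]
  intro hfb
  by_contra hfa
  exact hnc hab (by omega) (by omega)

theorem filter_openIndices_eq_reverse_map_closers (hf : Involutive f) (hnc : Noncrossing f)
    (hblock : ∀ x, s ≤ x → x < s + m → f x < s ∨ s + m ≤ f x) :
    (openIndices f s).filter (fun x => !decide (s + m ≤ f x))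
      = ((closers f s m).map f).reverse := by
  refine List.Pairwise.eq_of_mem_iff (r := (· < ·)) (List.pairwise_lt_range.filter _ |>.filter _)
    ?_ fun y => ?_
  · rw [List.pairwise_reverse, List.pairwise_map]
    refine ((List.pairwise_lt_range' 1).filter _).imp_of_mem fun {a b} ha hb hab => ?_
    rw [mem_closers] at ha hb
    have ha' := hblock a ha.1.1 ha.1.2
    have hb' := hblock b hb.1.1 hb.1.2
    rcases lt_trichotomy (f a) (f b) with h | h | h
    · exact absurd (by rw [hf a, hf b]; omega) (hnc h (by rw [hf a]; omega))
    · exact absurd (hf.injective h) hab.ne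
    · exact h
  · simp only [List.mem_filter, mem_openIndices, List.mem_reverse, List.mem_map, mem_closers,
      Bool.not_eq_true', decide_eq_false_iff_not, not_le]
    constructor
    · rintro ⟨⟨hy, hfy⟩, hfy'⟩
      exact ⟨f y, ⟨⟨hfy, hfy'⟩, by rw [hf y]; omega⟩, hf y⟩
    · rintro ⟨x, ⟨⟨hx, hx'⟩, hfx⟩, rfl⟩
      have := hblock x hx hx'
      rw [hf x]
      omega

end Block

section Run

variable {f : ℕ → ℕ}

theorem filter_openIndices_append_filter_range' (s m : ℕ) :
    (openIndices f s).filter (fun x => s + m ≤ f x)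
      ++ (List.range' s m).filter (fun x => s + m ≤ f x) = openIndices f (s + m) := by
  have hrange : List.range (s + m) = List.range s ++ List.range' s m := by
    simpa [List.range_eq_range'] using
      (List.range'_append (s := 0) (m := s) (n := m) (step := 1)).symm
  rw [openIndices, openIndices, hrange, List.filter_append, List.filter_filter]
  congr 1
  refine List.filter_congr fun x _ => ?_
  by_cases h : s + m ≤ f x <;> simp [h]
  omega

theorem tauStep_openIndices (hf : Involutive f) (hnc : Noncrossing f) {s m : ℕ}
    (hblock : ∀ x, s ≤ x → x < s + m → f x < s ∨ s + m ≤ f x) (PR : List (ℕ × ℕ)) :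
    tauStep (openIndices f s, PR, s) (m, (closers f s m).length)
      = (openIndices f (s + m), PR ++ (closers f s m).map (fun x => (f x, x)), s + m) := by
  have hsorted := pairwise_openIndices_partner (s := s) (m := m) hnc
  have hlen := congrArg List.length (List.filter_append_filter_not_of_pairwise hsorted)
  rw [List.length_append, filter_openIndices_eq_reverse_map_closers hf hnc hblock,
    List.length_reverse, List.length_map] at hlen
  simp only [tauStep, show (openIndices f s).length - (closers f s m).length
    = ((openIndices f s).filter (fun x => s + m ≤ f x)).length by omega]
  rw [List.take_length_filter_of_pairwise hsorted, List.drop_length_filter_of_pairwise hsorted,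
    filter_openIndices_eq_reverse_map_closers hf hnc hblock, List.reverse_reverse,
    drop_length_closers hf hnc hblock, take_length_closers hf hnc hblock,
    filter_openIndices_append_filter_range']
  simpa using List.zip_map' (f := f) (g := id) (l := closers f s m)

theorem length_closers_le (hf : Involutive f) (hnc : Noncrossing f) {s m : ℕ}
    (hblock : ∀ x, s ≤ x → x < s + m → f x < s ∨ s + m ≤ f x) :
    (closers f s m).length ≤ (openIndices f s).length := by
  simpa [filter_openIndices_eq_reverse_map_closers hf hnc hblock] using
    List.length_filter_le (fun x => !decide (s + m ≤ f x)) (openIndices f s)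

theorem length_openIndices_add (hf : Involutive f) (hnc : Noncrossing f) {s m : ℕ}
    (hblock : ∀ x, s ≤ x → x < s + m → f x < s ∨ s + m ≤ f x) :
    (openIndices f (s + m)).length
      = (openIndices f s).length - (closers f s m).length + (m - (closers f s m).length) := by
  have := congrArg (fun st => st.1.length) (tauStep_openIndices hf hnc hblock [])
  simp only [tauStep, List.length_append, List.length_take, List.length_drop,
    List.length_range'] at this
  omega

theorem tauDefinedAux_closerCounts (hf : Involutive f) (hnc : Noncrossing f) :
    ∀ (rest : List ℕ) (s : ℕ), RespectsBlocks f s rest →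
      tauDefinedAux (openIndices f s).length (rest.zip (closerCounts f s rest))
  | [], _, _ => trivial
  | m :: rest, s, ⟨hblock, hrest⟩ => by
    refine ⟨length_closers_le hf hnc hblock, (List.length_filter_le _ _).trans (by simp), ?_⟩
    rw [← length_openIndices_add hf hnc hblock]
    exact tauDefinedAux_closerCounts hf hnc rest (s + m) hrest

theorem foldl_tauStep_closerCounts (hf : Involutive f) (hnc : Noncrossing f) :
    ∀ (rest : List ℕ) (s : ℕ) (PR : List (ℕ × ℕ)), RespectsBlocks f s rest →
      (rest.zip (closerCounts f s rest)).foldl tauStep (openIndices f s, PR, s)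
        = (openIndices f (s + rest.sum),
            PR ++ (closers f s rest.sum).map (fun x => (f x, x)), s + rest.sum)
  | [], s, PR, _ => by simp [closers]
  | m :: rest, s, PR, ⟨hblock, hrest⟩ => by
    rw [closerCounts, List.zip_cons_cons, List.foldl_cons, tauStep_openIndices hf hnc hblock,
      foldl_tauStep_closerCounts hf hnc rest (s + m) _ hrest, List.sum_cons, closers_add,
      List.map_append, List.append_assoc, add_assoc]

theorem pair_mem_map_closers (hf : Involutive f) {s k x : ℕ} (hx : f x ≠ x)
    (h1 : s ≤ max x (f x)) (h2 : max x (f x) < s + k) :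
    (x, f x) ∈ (closers f s k).map (fun y => (f y, y)) ∨
      (f x, x) ∈ (closers f s k).map (fun y => (f y, y)) := by
  rcases hx.lt_or_gt with h | h
  · exact Or.inr (List.mem_map.2 ⟨x, mem_closers.2 ⟨⟨by omega, by omega⟩, h⟩, rfl⟩)
  · exact Or.inl (List.mem_map.2
      ⟨f x, mem_closers.2 ⟨⟨by omega, by omega⟩, by rwa [hf x]⟩, by rw [hf x]⟩)

end Run

section Uniqueness

variable {L : List ℕ} {PR : List (ℕ × ℕ)} {s m q : ℕ}

theorem mem_tauStep_fst {x : ℕ} (hx : x ∈ (tauStep (L, PR, s) (m, q)).1) :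
    x ∈ L ∨ s + q ≤ x ∧ x < s + m := by
  simp only [tauStep, List.mem_append, List.drop_range', List.mem_range'_1] at hx
  rcases hx with hx | hx
  · exact Or.inl (List.mem_of_mem_take hx)
  · right; omega

theorem lt_of_mem_tauStep_fst {x : ℕ} (hL : ∀ y ∈ L, y < s)
    (hx : x ∈ (tauStep (L, PR, s) (m, q)).1) : x < s + m := by
  rcases mem_tauStep_fst hx with h | h
  · exact (hL x h).trans_le (Nat.le_add_right s m)
  · exact h.2

theorem mem_tauStep_snd {pr : ℕ × ℕ} (hpr : pr ∈ (tauStep (L, PR, s) (m, q)).2.1) :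
    pr ∈ PR ∨ pr.1 ∈ L ∧ s ≤ pr.2 ∧ pr.2 < s + q := by
  simp only [tauStep, List.mem_append] at hpr
  rcases hpr with hpr | hpr
  · exact Or.inl hpr
  obtain ⟨h1, h2⟩ := List.of_mem_zip hpr
  rw [List.mem_reverse] at h1
  refine Or.inr ⟨List.mem_of_mem_drop h1, ?_⟩
  rcases le_total q m with h | h
  · rwa [List.take_range'_of_length_ge h, List.mem_range'_1] at h2
  · rw [List.take_of_length_le (by simpa using h), List.mem_range'_1] at h2
    omega

theorem mem_foldl_tauStep :
    ∀ (steps : List (ℕ × ℕ)) (L : List ℕ) (PR : List (ℕ × ℕ)) (c : ℕ),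
    (∀ x ∈ L, x < c) → ∀ pr ∈ (steps.foldl tauStep (L, PR, c)).2.1,
      pr ∈ PR ∨ (pr.1 ∈ L ∨ c ≤ pr.1) ∧ c ≤ pr.2
  | [], _, _, _, _, _, hpr => Or.inl hpr
  | (m, q) :: steps, L, PR, c, hL, pr, hpr => by
    rcases mem_foldl_tauStep steps _ _ (c + m) (fun _ hx => lt_of_mem_tauStep_fst hL hx) pr hpr
      with h | ⟨h1, h2⟩
    · rcases mem_tauStep_snd h with h | ⟨h1, h2, _⟩
      · exact Or.inl h
      · exact Or.inr ⟨Or.inl h1, h2⟩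
    · refine Or.inr ⟨?_, by omega⟩
      rcases h1 with h | h
      · rcases mem_tauStep_fst h with h | h
        · exact Or.inl h
        · exact Or.inr (by omega)
      · exact Or.inr (by omega)

theorem mem_foldl_tauStep_cons {steps : List (ℕ × ℕ)} (hqm : q ≤ m) (hL : ∀ x ∈ L, x < s)
    (hPR : ∀ pr ∈ PR, pr.1 < s ∧ pr.2 < s) {pr : ℕ × ℕ}
    (hpr : pr ∈ (((m, q) :: steps).foldl tauStep (L, PR, s)).2.1) :
    pr.1 < s ∧ pr.2 < s ∨ pr.1 < s ∧ s ≤ pr.2 ∧ pr.2 < s + q ∨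
      (pr.1 < s ∨ s + q ≤ pr.1) ∧ s + m ≤ pr.2 := by
  rcases mem_foldl_tauStep steps _ _ (s + m) (fun _ hx => lt_of_mem_tauStep_fst hL hx) pr hpr
    with h | ⟨h1, h2⟩
  · rcases mem_tauStep_snd h with h | ⟨h1, h2⟩
    · exact Or.inl (hPR pr h)
    · exact Or.inr (Or.inl ⟨hL _ h1, h2⟩)
  · refine Or.inr (Or.inr ⟨?_, h2⟩)
    rcases h1 with h | h
    · rcases mem_tauStep_fst h with h | h
      · exact Or.inl (hL _ h)
      · exact Or.inr h.1
    · exact Or.inr (by omega)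

theorem length_closers_eq_of_mem {f : ℕ → ℕ} {steps : List (ℕ × ℕ)} (hqm : q ≤ m)
    (hL : ∀ x ∈ L, x < s) (hPR : ∀ pr ∈ PR, pr.1 < s ∧ pr.2 < s)
    (hmem : ∀ x, s ≤ x → x < s + m →
      (x, f x) ∈ (((m, q) :: steps).foldl tauStep (L, PR, s)).2.1 ∨
        (f x, x) ∈ (((m, q) :: steps).foldl tauStep (L, PR, s)).2.1) :
    (closers f s m).length = q := by
  have hcloser : ∀ x, s ≤ x → x < s + m → (f x < x ↔ x < s + q) := by
    intro x h1 h2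
    rcases hmem x h1 h2 with h | h
    · have := mem_foldl_tauStep_cons hqm hL hPR h; dsimp only at this; omega
    · have := mem_foldl_tauStep_cons hqm hL hPR h; dsimp only at this; omega
  have hrange : closers f s m = List.range' s q := by
    rw [closers, ← List.take_append_drop q (List.range' s m), List.filter_append,
      List.take_range'_of_length_ge hqm, List.drop_range', List.filter_eq_self.2,
      List.filter_eq_nil_iff.2, List.append_nil]
    · intro x hx
      rw [List.mem_range'_1] at hx
      simpa [hcloser x (by omega) (by omega)] using (by omega : ¬ x < s + q)
    · intro x hx
      rw [List.mem_range'_1] at hx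
      simpa [hcloser x (by omega) (by omega)] using (by omega : x < s + q)
  rw [hrange, List.length_range']

end Uniqueness

theorem eq_closerCounts {f : ℕ → ℕ} (hf : Involutive f) (hnc : Noncrossing f) :
    ∀ (rest ps : List ℕ) (s : ℕ) (PR : List (ℕ × ℕ)), RespectsBlocks f s rest →
      ps.length = rest.length → tauDefinedAux (openIndices f s).length (rest.zip ps) →
      (∀ pr ∈ PR, pr.1 < s ∧ pr.2 < s) →
      (∀ x, s ≤ x → x < s + rest.sum →
        (x, f x) ∈ ((rest.zip ps).foldl tauStep (openIndices f s, PR, s)).2.1 ∨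
          (f x, x) ∈ ((rest.zip ps).foldl tauStep (openIndices f s, PR, s)).2.1) →
      ps = closerCounts f s rest
  | [], _, _, _, _, hlen, _, _, _ => List.eq_nil_of_length_eq_zero hlen
  | _ :: _, [], _, _, _, hlen, _, _, _ => by simp at hlen
  | m :: rest, q :: ps, s, PR, ⟨hblock, hrest⟩, hlen, ⟨_, hqm, hdef⟩, hPR, hmem => by
    rw [List.zip_cons_cons] at hmem
    obtain rfl : (closers f s m).length = q :=
      length_closers_eq_of_mem hqm (fun x hx => (mem_openIndices.1 hx).1) hPR
        fun x h1 h2 => hmem x h1 (by simp; omega)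
    rw [List.foldl_cons, tauStep_openIndices hf hnc hblock] at hmem
    rw [← length_openIndices_add hf hnc hblock] at hdef
    rw [closerCounts, ← eq_closerCounts hf hnc rest ps (s + m) _ hrest (by simpa using hlen) hdef
      ?_ fun x h1 h2 => hmem x (by omega) (by simp; omega)]
    intro pr hpr
    rcases List.mem_append.1 hpr with h | h
    · have := hPR pr h; omega
    · obtain ⟨x, hx, rfl⟩ := List.mem_map.1 h
      rw [mem_closers] at hx
      dsimp only
      omega

theorem stmt6_general (n0 : ℕ) (ns : List ℕ)
    (P : Pairing ((n0 :: ns).sum)) (hnc : P.IsNoncrossing) (hresp : RespectsL (n0 :: ns) P) :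
    ∃! ps : List ℕ, ps.length = ns.length ∧
      tauDefinedAux n0 (ns.zip ps) ∧ TauEqualsPairing n0 (ns.zip ps) P := by
  have hf := P.involutive_extend
  have hncf := hnc.noncrossing_extend
  obtain ⟨hfirst, hrest⟩ := hresp.respectsBlocks_extend
  rw [zero_add] at hrest
  have hopen : openIndices P.extend n0 = List.range n0 := List.filter_eq_self.2 fun x hx => by
    have := hfirst x (Nat.zero_le x) (by simpa using hx)
    simp only [decide_eq_true_eq]
    omega
  have hrun : ∀ ps, tauRun n0 (ns.zip ps)
      = (ns.zip ps).foldl tauStep (openIndices P.extend n0, [], n0) := fun ps => by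
    rw [hopen]; rfl
  refine ⟨closerCounts P.extend n0 ns, ⟨length_closerCounts ns n0, ?_, fun i => ?_⟩, ?_⟩
  · simpa only [hopen, List.length_range] using tauDefinedAux_closerCounts hf hncf ns n0 hrest
  · rw [hrun, foldl_tauStep_closerCounts hf hncf ns n0 [] hrest, List.nil_append, ← P.extend_val]
    have hsum : (n0 :: ns).sum = n0 + ns.sum := List.sum_cons
    have hi := i.2
    have hfi := P.extend_val i ▸ (P.pair i).2
    have hmax : n0 ≤ max (i : ℕ) (P.extend i) := by
      rcases Nat.lt_or_ge i n0 with h | h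
      · have := hfirst i (Nat.zero_le _) (by omega); omega
      · omega
    exact pair_mem_map_closers hf (P.extend_ne i) hmax (by omega)
  · rintro ps ⟨hlen, hdef, heq⟩
    refine eq_closerCounts hf hncf ns ps n0 [] hrest hlen (by rwa [hopen, List.length_range])
      (by simp) fun x _ h2 => ?_
    have hx : x < (n0 :: ns).sum := by simpa using h2
    simpa only [hrun, P.extend_val ⟨x, hx⟩] using heq ⟨x, hx⟩

theorem stmt6 (n0 : ℕ) (ns : List ℕ) (hn0 : 1 ≤ n0) (hns : ∀ m ∈ ns, 1 ≤ m)
    (P : Pairing ((n0 :: ns).sum)) (hnc : P.IsNoncrossing) (hresp : RespectsL (n0 :: ns) P) :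
    ∃! ps : List ℕ, ps.length = ns.length ∧
      tauDefinedAux n0 (ns.zip ps) ∧ TauEqualsPairing n0 (ns.zip ps) P :=
  stmt6_general n0 ns P hnc hresp
end

section
/- Let n₁,…,n_r be positive integers. A pairing of [n₁+⋯+n_r] belongs to NC₂(n₁⊗⋯⊗n_r) if and only if it equals a composition τ_{p_{r−1}}∘⋯∘τ_{p₁} of partial pairings for some natural numbers p₁,…,p_{r−1} satisfying: 0 ≤ p₁ ≤ min{n₁,n₂}; 0 ≤ p_k ≤ min{n_{k+1}, n₁+⋯+n_k − 2(p₁+⋯+p_{k−1})} for 2 ≤ k ≤ r−1; and 2(p₁+⋯+p_{r−1}) = n₁+⋯+n_r. -/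
theorem take_range'_of_le {s m p : ℕ} (h : p ≤ m) :
    (List.range' s m).take p = List.range' s p := by
  rw [List.range'_eq_map_range, List.range'_eq_map_range, ← List.map_take, List.take_range,
    min_eq_left h]

theorem lt_of_mem_zip_of_lt {l₁ l₂ : List ℕ} (h₁ : l₁.Pairwise (· > ·)) (h₂ : l₂.Pairwise (· < ·))
    {a b c d : ℕ} (hab : (a, b) ∈ l₁.zip l₂) (hcd : (c, d) ∈ l₁.zip l₂) (hac : a < c) : d < b := by
  induction l₁ generalizing l₂ with
  | nil => simp at hab
  | cons x xs ih =>
    cases l₂ with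
    | nil => simp at hab
    | cons y ys =>
      rw [List.pairwise_cons] at h₁ h₂
      simp only [List.zip_cons_cons, List.mem_cons, Prod.mk.injEq] at hab hcd
      rcases hab with ⟨rfl, rfl⟩ | hab <;> rcases hcd with ⟨rfl, rfl⟩ | hcd
      · exact absurd hac (lt_irrefl _)
      · exact absurd hac (h₁.1 c (List.of_mem_zip hcd).1).asymm
      · exact h₂.1 b (List.of_mem_zip hab).2
      · exact ih h₁.2 h₂.2 hab hcd

theorem lt_card_filter_range_iff {Q : ℕ → Prop} [DecidablePred Q] {m : ℕ}
    (hQ : ∀ t t', t' ≤ t → t < m → Q t → Q t') {t : ℕ} (ht : t < m) :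
    Q t ↔ t < ((Finset.range m).filter Q).card := by
  constructor
  · intro hQt
    have hsub : Finset.range (t + 1) ⊆ (Finset.range m).filter Q := fun u hu => by
      rw [Finset.mem_range] at hu
      exact Finset.mem_filter.2 ⟨Finset.mem_range.2 (by omega), hQ t u (by omega) ht hQt⟩
    simpa using Finset.card_le_card hsub
  · intro hcard
    by_contra hQt
    have hsub : (Finset.range m).filter Q ⊆ Finset.range t := fun u hu => by
      rw [Finset.mem_filter, Finset.mem_range] at hu
      exact Finset.mem_range.2 (not_le.1 fun htu => hQt (hQ u t htu hu.1 hu.2))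
    simpa using (Finset.card_le_card hsub).trans_lt' hcard

theorem tauStep_of_le {L : List ℕ} {A : List (ℕ × ℕ)} {s m p : ℕ} (h : p ≤ m) :
    tauStep (L, A, s) (m, p) =
      (L.take (L.length - p) ++ List.range' (s + p) (m - p),
        A ++ (L.drop (L.length - p)).reverse.zip (List.range' s p), s + m) := by
  simp [tauStep, take_range'_of_le h, List.drop_range']

theorem tauDefinedAux_zip_iff {ns ps : List ℕ} (h : ps.length = ns.length) (len : ℕ) :
    tauDefinedAux len (ns.zip ps) ↔ ∀ k < ps.length, ps.getD k 0 ≤ ns.getD k 0 ∧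
      ps.getD k 0 + 2 * (ps.take k).sum ≤ len + (ns.take k).sum := by
  induction ns generalizing ps len with
  | nil => simp_all [tauDefinedAux]
  | cons m ns ih =>
    obtain _ | ⟨p, ps⟩ := ps
    · simp at h
    simp only [List.zip_cons_cons, tauDefinedAux, ih (Nat.succ_inj.1 h), List.length_cons]
    constructor
    · rintro ⟨hpl, hpm, hrest⟩ (_ | k) hk
      · simpa using ⟨hpm, hpl⟩
      · have := hrest k (by omega)
        simp only [List.getD_cons_succ, List.take_succ_cons, List.sum_cons]
        omega
    · intro hall
      have h0 := hall 0 (by omega)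
      simp only [List.getD_cons_zero, List.take_zero, List.sum_nil] at h0
      refine ⟨by omega, h0.1, fun k hk => ?_⟩
      have := hall (k + 1) (by omega)
      simp only [List.getD_cons_succ, List.take_succ_cons, List.sum_cons] at this
      omega

theorem length_foldl_tauStep :
    ∀ (steps : List (ℕ × ℕ)) (st : List ℕ × List (ℕ × ℕ) × ℕ),
      tauDefinedAux st.1.length steps →
      (steps.foldl tauStep st).1.length + 2 * (steps.map Prod.snd).sum =
        st.1.length + (steps.map Prod.fst).sum
  | [], _, _ => by simp
  | (m, p) :: rest, st, ⟨hpl, hpm, hrest⟩ => by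
    have hlen : (tauStep st (m, p)).1.length = st.1.length - p + (m - p) := by
      simp [tauStep]
    have := length_foldl_tauStep rest (tauStep st (m, p)) (hlen ▸ hrest)
    simp only [List.foldl_cons, List.map_cons, List.sum_cons] at this ⊢
    omega

-- `cuts` are the block starts: a pair straddling one of them joins two different blocks.
structure TauInvariant (cuts : Set ℕ) (L : List ℕ) (A : List (ℕ × ℕ)) (s : ℕ) :
    Prop where
  sorted : L.Pairwise (· < ·)
  open_lt : ∀ l ∈ L, l < s
  pair_lt : ∀ ab ∈ A, ab.1 < ab.2 ∧ ab.2 < s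
  exists_cut : ∀ ab ∈ A, ∃ c ∈ cuts, ab.1 < c ∧ c ≤ ab.2
  noncrossing : ∀ ab ∈ A, ∀ cd ∈ A, ¬ (ab.1 < cd.1 ∧ cd.1 < ab.2 ∧ ab.2 < cd.2)
  open_not_inside : ∀ ab ∈ A, ∀ l ∈ L, ¬ (ab.1 < l ∧ l < ab.2)

namespace TauInvariant

variable {cuts : Set ℕ} {L : List ℕ} {A : List (ℕ × ℕ)} {s m p : ℕ}

theorem range (n : ℕ) : TauInvariant cuts (List.range n) [] n where
  sorted := List.pairwise_lt_range
  open_lt _ := List.mem_range.1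
  pair_lt := by simp
  exists_cut := by simp
  noncrossing := by simp
  open_not_inside := by simp

theorem mem_zip_range' {ab : ℕ × ℕ} {R : List ℕ} (hab : ab ∈ R.reverse.zip (List.range' s p)) :
    ab.1 ∈ R ∧ s ≤ ab.2 ∧ ab.2 < s + p := by
  obtain ⟨ha, hb⟩ := List.of_mem_zip hab
  exact ⟨List.mem_reverse.1 ha, List.mem_range'_1.1 hb⟩

theorem noncrossing_step (h : TauInvariant cuts L A s) (k : ℕ) :
    ∀ ab ∈ A ++ (L.drop k).reverse.zip (List.range' s p),
    ∀ cd ∈ A ++ (L.drop k).reverse.zip (List.range' s p),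
      ¬ (ab.1 < cd.1 ∧ cd.1 < ab.2 ∧ ab.2 < cd.2) := by
  intro ab hab cd hcd
  rcases List.mem_append.1 hab with hab | hab <;> rcases List.mem_append.1 hcd with hcd | hcd
  · exact h.noncrossing ab hab cd hcd
  · exact fun hx => h.open_not_inside ab hab cd.1
      (List.mem_of_mem_drop (mem_zip_range' hcd).1) ⟨hx.1, hx.2.1⟩
  · have := h.open_lt _ (List.mem_of_mem_drop (mem_zip_range' hab).1)
    have := mem_zip_range' hab
    have := h.pair_lt cd hcd
    omega
  · have hdec : ((L.drop k).reverse).Pairwise (· > ·) :=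
      List.pairwise_reverse.2 (h.sorted.sublist (List.drop_sublist _ _))
    exact fun hx => (lt_of_mem_zip_of_lt hdec List.pairwise_lt_range' hab hcd hx.1).asymm hx.2.2

theorem open_not_inside_step (h : TauInvariant cuts L A s) (k : ℕ) :
    ∀ ab ∈ A ++ (L.drop k).reverse.zip (List.range' s p),
    ∀ l ∈ L.take k ++ List.range' (s + p) (m - p), ¬ (ab.1 < l ∧ l < ab.2) := by
  intro ab hab l hl
  rcases List.mem_append.1 hab with hab | hab <;> rcases List.mem_append.1 hl with hl | hl
  · exact h.open_not_inside ab hab l (List.mem_of_mem_take hl)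
  · have := h.pair_lt ab hab
    rw [List.mem_range'_1] at hl
    omega
  · have := h.sorted
    rw [← List.take_append_drop k L, List.pairwise_append] at this
    have := this.2.2 l hl ab.1 (mem_zip_range' hab).1
    omega
  · have := mem_zip_range' hab
    rw [List.mem_range'_1] at hl
    omega

theorem step (h : TauInvariant cuts L A s) (hs : s ∈ cuts) (hpm : p ≤ m) :
    TauInvariant cuts (L.take (L.length - p) ++ List.range' (s + p) (m - p))
      (A ++ (L.drop (L.length - p)).reverse.zip (List.range' s p)) (s + m) := by
  have hkept : ∀ l ∈ L.take (L.length - p), l < s := fun l hl =>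
    h.open_lt l (List.mem_of_mem_take hl)
  have hnew : ∀ ab ∈ (L.drop (L.length - p)).reverse.zip (List.range' s p),
      ab.1 < s ∧ s ≤ ab.2 ∧ ab.2 < s + p := fun ab hab =>
    ⟨h.open_lt _ (List.mem_of_mem_drop (mem_zip_range' hab).1), (mem_zip_range' hab).2⟩
  refine ⟨?_, ?_, ?_, ?_, h.noncrossing_step _, h.open_not_inside_step _⟩
  · refine List.pairwise_append.2 ⟨h.sorted.sublist (List.take_sublist _ _),
      List.pairwise_lt_range', fun x hx y hy => ?_⟩
    have := hkept x hx
    rw [List.mem_range'_1] at hy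
    omega
  · intro l hl
    rcases List.mem_append.1 hl with hl | hl
    · have := hkept l hl
      omega
    · rw [List.mem_range'_1] at hl
      omega
  · intro ab hab
    rcases List.mem_append.1 hab with hab | hab
    · have := h.pair_lt ab hab
      omega
    · have := hnew ab hab
      omega
  · intro ab hab
    rcases List.mem_append.1 hab with hab | hab
    · exact h.exists_cut ab hab
    · have := hnew ab hab
      exact ⟨s, hs, by omega, by omega⟩

theorem foldl : ∀ (steps : List (ℕ × ℕ)) (st : List ℕ × List (ℕ × ℕ) × ℕ),
    TauInvariant cuts st.1 st.2.1 st.2.2 → tauDefinedAux st.1.length steps →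
    (∀ k < steps.length, st.2.2 + ((steps.map Prod.fst).take k).sum ∈ cuts) →
    TauInvariant cuts (steps.foldl tauStep st).1 (steps.foldl tauStep st).2.1
      (steps.foldl tauStep st).2.2
  | [], _, h, _, _ => h
  | (m, p) :: rest, (L, A, s), h, ⟨hpL, hpm, hrest⟩, hcuts => by
    rw [List.foldl_cons, tauStep_of_le hpm]
    refine foldl rest _ (h.step (by simpa using hcuts 0) hpm) ?_ fun k hk => ?_
    · simpa [hpL] using hrest
    · simpa [add_assoc] using hcuts (k + 1) (by simpa using hk)

end TauInvariant

theorem blockStartL_mono (nn : List ℕ) : Monotone (blockStartL nn) := fun _ _ h =>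
  (List.take_prefix_take_left h).sublist.sum_le_sum fun _ _ => Nat.zero_le _

theorem blockStartL_succ {nn : List ℕ} {i : ℕ} (hi : i < nn.length) :
    blockStartL nn (i + 1) = blockStartL nn i + nn.getD i 0 := by
  rw [blockStartL, blockStartL, List.sum_take_succ nn i hi, List.getD_eq_getElem nn 0 hi]

theorem blockStartL_cons_succ (n0 : ℕ) (ns : List ℕ) (k : ℕ) :
    blockStartL (n0 :: ns) (k + 1) = n0 + (ns.take k).sum := by
  simp [blockStartL]

theorem not_inBlockL_of_lt_of_le {nn : List ℕ} {i k a b : ℕ} (ha : a < blockStartL nn k)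
    (hb : blockStartL nn k ≤ b) (hia : inBlockL nn i a) : ¬ inBlockL nn i b := by
  rintro ⟨hi, hib, hbi⟩
  rw [← blockStartL_succ hi] at hbi
  rcases lt_or_ge i k with hik | hki
  · have : blockStartL nn (i + 1) ≤ blockStartL nn k := blockStartL_mono nn hik
    omega
  · have := blockStartL_mono nn hki
    have := hia.2.1
    omega

theorem isNoncrossing_and_respectsL_of_tauEqualsPairing {n0 : ℕ} {ns ps : List ℕ}
    (hlen : ps.length = ns.length) (hdef : tauDefinedAux n0 (ns.zip ps))
    {P : Pairing (n0 :: ns).sum} (hP : TauEqualsPairing n0 (ns.zip ps) P) :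
    P.IsNoncrossing ∧ RespectsL (n0 :: ns) P := by
  have hfinal := TauInvariant.foldl (cuts := Set.range (blockStartL (n0 :: ns))) (ns.zip ps)
    (List.range n0, [], n0) (TauInvariant.range n0) (by simpa using hdef) fun k _ =>
      ⟨k + 1, by simp [blockStartL, List.map_fst_zip hlen.ge]⟩
  have horient : ∀ i : Fin _, (i : ℕ) < P.pair i →
      ((i : ℕ), (P.pair i : ℕ)) ∈ (tauRun n0 (ns.zip ps)).2.1 :=
    fun i hi => (hP i).resolve_right fun hmem => by
      have := (hfinal.pair_lt _ hmem).1
      simp only at this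
      omega
  constructor
  · rintro ⟨i, j, hij, hji, hjj⟩
    exact hfinal.noncrossing _ (horient i (hij.trans hji)) _ (horient j (hji.trans hjj))
      ⟨hij, hji, hjj⟩
  · intro j i hj hpj
    rcases lt_or_gt_of_ne (Fin.val_ne_of_ne (P.fixedFree j).symm) with hlt | hgt
    · obtain ⟨_, ⟨c, rfl⟩, hc⟩ := hfinal.exists_cut _ (horient j hlt)
      exact not_inBlockL_of_lt_of_le hc.1 hc.2 hj hpj
    · have hmem := horient (P.pair j) (by rwa [P.involutive])
      rw [P.involutive] at hmem
      obtain ⟨_, ⟨c, rfl⟩, hc⟩ := hfinal.exists_cut _ hmem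
      exact not_inBlockL_of_lt_of_le hc.1 hc.2 hpj hj

section OpenIndices

variable (pv : ℕ → ℕ)

-- The indices still unpaired once the blocks to the left of `s` have been read.
def openList (s : ℕ) : List ℕ := (List.range s).filter fun j => s ≤ pv j

def NoPairWithin (a b : ℕ) : Prop := ∀ x ∈ Set.Ico a b, pv x ∉ Set.Ico a b

-- The `p` of the partial pairing `τ_p` that reads the block `[s, s + m)`.
def crossCount (s m : ℕ) : ℕ := ((Finset.range m).filter fun t => pv (s + t) < s).card

def crossCounts : ℕ → List ℕ → List ℕ
  | _, [] => []
  | s, m :: rest => crossCount pv s m :: crossCounts (s + m) rest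

def PairFreeBlocks : ℕ → List ℕ → Prop
  | _, [] => True
  | s, m :: rest => NoPairWithin pv s (s + m) ∧ PairFreeBlocks (s + m) rest

def ContainsPairsBelow (A : List (ℕ × ℕ)) (s : ℕ) : Prop :=
  ∀ x < s, pv x < s → (x, pv x) ∈ A ∨ (pv x, x) ∈ A

variable {pv}

theorem length_crossCounts (s : ℕ) (ns : List ℕ) :
    (crossCounts pv s ns).length = ns.length := by
  induction ns generalizing s <;> simp [crossCounts, *]

theorem crossCount_le (s m : ℕ) : crossCount pv s m ≤ m :=
  (Finset.card_filter_le _ _).trans_eq (Finset.card_range m)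

theorem pairFreeBlocks_of_forall {s : ℕ} {ns : List ℕ}
    (h : ∀ k < ns.length, NoPairWithin pv (s + (ns.take k).sum) (s + (ns.take (k + 1)).sum)) :
    PairFreeBlocks pv s ns := by
  induction ns generalizing s with
  | nil => trivial
  | cons m ns ih =>
    refine ⟨by simpa using h 0 (by simp), ih fun k hk => ?_⟩
    simpa [add_assoc] using h (k + 1) (by simpa using hk)

theorem openList_eq_range {n : ℕ} (h : NoPairWithin pv 0 n) : openList pv n = List.range n :=
  List.filter_eq_self.2 fun j hj => by
    have := h j ⟨Nat.zero_le j, List.mem_range.1 hj⟩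
    simp_all

theorem openList_eq_nil {N : ℕ} (h : ∀ j < N, pv j < N) : openList pv N = [] :=
  List.filter_eq_nil_iff.2 fun j hj => by
    have := h j (List.mem_range.1 hj)
    simp only [decide_eq_true_eq]
    omega

theorem containsPairsBelow_nil {n : ℕ} (h : NoPairWithin pv 0 n) : ContainsPairsBelow pv [] n :=
  fun x hx hpx => absurd ⟨Nat.zero_le _, hpx⟩ (h x ⟨Nat.zero_le x, hx⟩)

variable (hinv : Function.Involutive pv)
  (hnc : ∀ x y, x < y → y < pv x → pv x < pv y → False)
include hinv hnc

section Block

variable {s m : ℕ} (hblock : NoPairWithin pv s (s + m))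
include hblock

theorem partner_lt_iff_lt_crossCount {t : ℕ} (ht : t < m) :
    pv (s + t) < s ↔ t < crossCount pv s m := by
  refine lt_card_filter_range_iff (Q := fun t => pv (s + t) < s) (fun t t' ht' htm hQ => ?_) ht
  by_contra hQ'
  have hbeyond : s + m ≤ pv (s + t') := by
    by_contra hlt
    exact hblock (s + t') ⟨by omega, by omega⟩ ⟨by omega, by omega⟩
  have hpp : pv (pv (s + t)) = s + t := hinv _
  rcases ht'.lt_or_eq with ht' | rfl
  · exact hnc (pv (s + t)) (s + t') (by omega) (by omega) (by omega)
  · exact hQ' hQ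

theorem partner_lt_partner_of_lt {t t' : ℕ} (htt' : t < t') (ht' : t' < crossCount pv s m) :
    pv (s + t') < pv (s + t) := by
  have hm := crossCount_le (pv := pv) s m
  have ht := (partner_lt_iff_lt_crossCount hinv hnc hblock (t := t) (by omega)).2 (by omega)
  have ht'' := (partner_lt_iff_lt_crossCount hinv hnc hblock (t := t') (by omega)).2 ht'
  have hpp : pv (pv (s + t)) = s + t := hinv _
  have hpp' : pv (pv (s + t')) = s + t' := hinv _
  rcases lt_trichotomy (pv (s + t')) (pv (s + t)) with h | h | h
  · exact h
  · have := hinv.injective h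
    omega
  · exact (hnc (pv (s + t)) (pv (s + t')) h (by omega) (by omega)).elim

theorem lt_partner_of_add_le {j t : ℕ} (hj : j < s) (hpj : s + m ≤ pv j)
    (ht : t < crossCount pv s m) : j < pv (s + t) := by
  have hm := crossCount_le (pv := pv) s m
  have := (partner_lt_iff_lt_crossCount hinv hnc hblock (t := t) (by omega)).2 ht
  have hpp : pv (pv (s + t)) = s + t := hinv _
  by_contra hle
  rcases (not_lt.1 hle).lt_or_eq with hlt | heq
  · exact hnc (pv (s + t)) j hlt (by omega) (by omega)
  · rw [heq] at hpp
    omega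

theorem mem_openList_iff {j : ℕ} : j ∈ openList pv s ↔
    (j < s ∧ s + m ≤ pv j) ∨ ∃ t < crossCount pv s m, pv (s + t) = j := by
  have hm := crossCount_le (pv := pv) s m
  have hcross := fun t (ht : t < m) => partner_lt_iff_lt_crossCount hinv hnc hblock ht
  simp only [openList, List.mem_filter, List.mem_range, decide_eq_true_eq]
  constructor
  · rintro ⟨hj, hpj⟩
    by_cases hpjm : s + m ≤ pv j
    · exact Or.inl ⟨hj, hpjm⟩
    · have hj' : s + (pv j - s) = pv j := by omega
      refine Or.inr ⟨pv j - s, (hcross (pv j - s) (by omega)).1 ?_, by rw [hj', hinv]⟩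
      rwa [hj', hinv]
  · rintro (⟨hj, hpj⟩ | ⟨t, ht, rfl⟩)
    · exact ⟨hj, by omega⟩
    · rw [hinv]
      exact ⟨(hcross t (by omega)).2 ht, by omega⟩

theorem openList_eq_append :
    openList pv s = (List.range s).filter (fun j => s + m ≤ pv j) ++
      ((List.range (crossCount pv s m)).map fun t => pv (s + t)).reverse := by
  refine (List.Pairwise.eq_of_mem_iff (r := (· < ·)) ?_ (List.pairwise_lt_range.filter _)
    fun j => ?_).symm
  · refine List.pairwise_append.2 ⟨List.pairwise_lt_range.filter _,
      List.pairwise_reverse.2 (List.pairwise_map.2 ?_), ?_⟩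
    · exact List.pairwise_lt_range.imp_of_mem fun _ hb hab =>
        partner_lt_partner_of_lt hinv hnc hblock hab (List.mem_range.1 hb)
    · simp only [List.mem_filter, List.mem_range, decide_eq_true_eq, List.mem_reverse,
        List.mem_map]
      rintro j ⟨hj, hpj⟩ _ ⟨t, ht, rfl⟩
      exact lt_partner_of_add_le hinv hnc hblock hj hpj ht
  · change _ ↔ j ∈ openList pv s
    rw [mem_openList_iff hinv hnc hblock]
    simp

theorem openList_add :
    openList pv (s + m) = (List.range s).filter (fun j => s + m ≤ pv j) ++
      List.range' (s + crossCount pv s m) (m - crossCount pv s m) := by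
  have hcross := fun t (ht : t < m) => partner_lt_iff_lt_crossCount hinv hnc hblock ht
  have hm := crossCount_le (pv := pv) s m
  rw [openList, List.range_add, List.filter_append, ← List.range'_eq_map_range]
  congr 1
  conv_lhs => rw [← Nat.add_sub_cancel' hm, ← List.range'_append, List.filter_append]
  rw [List.filter_eq_nil_iff.2, List.filter_eq_self.2, List.nil_append, Nat.one_mul]
  · intro x hx
    rw [List.mem_range'_1] at hx
    have hge : s ≤ pv x := by
      have := (hcross (x - s) (by omega)).not.2 (by omega)
      rwa [show s + (x - s) = x by omega, not_lt] at this
    have hout := hblock x ⟨by omega, by omega⟩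
    simp only [Set.mem_Ico, not_and, not_lt] at hout
    have := hout hge
    simp only [decide_eq_true_eq]
    omega
  · intro x hx
    rw [List.mem_range'_1] at hx
    have := (hcross (x - s) (by omega)).2 (by omega)
    rw [show s + (x - s) = x by omega] at this
    simp only [decide_eq_true_eq]
    omega

theorem tauStep_openList (A : List (ℕ × ℕ)) :
    tauStep (openList pv s, A, s) (m, crossCount pv s m) =
      (openList pv (s + m),
        A ++ (List.range (crossCount pv s m)).map (fun t => (pv (s + t), s + t)), s + m) := by
  have hL := openList_eq_append hinv hnc hblock
  have hk : (openList pv s).length - crossCount pv s m =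
      ((List.range s).filter fun j => s + m ≤ pv j).length := by
    rw [hL]
    simp
  rw [tauStep_of_le (crossCount_le s m), hk, hL, List.take_left' rfl, List.drop_left' rfl,
    List.reverse_reverse, openList_add hinv hnc hblock,
    List.range'_eq_map_range (s := s) (n := crossCount pv s m), List.zip_map']

theorem length_openList_add :
    (openList pv (s + m)).length = (openList pv s).length - crossCount pv s m +
      (m - crossCount pv s m) := by
  rw [openList_eq_append hinv hnc hblock, openList_add hinv hnc hblock]
  simp

theorem containsPairsBelow_add {A : List (ℕ × ℕ)} (hA : ContainsPairsBelow pv A s) :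
    ContainsPairsBelow pv
      (A ++ (List.range (crossCount pv s m)).map fun t => (pv (s + t), s + t)) (s + m) := by
  have hcross := fun t (ht : t < m) => partner_lt_iff_lt_crossCount hinv hnc hblock ht
  intro x hx hpx
  by_cases hold : x < s ∧ pv x < s
  · exact (hA x hold.1 hold.2).imp (List.mem_append_left _) (List.mem_append_left _)
  simp only [List.mem_append, List.mem_map, List.mem_range, Prod.mk.injEq]
  rcases lt_or_ge x s with hxs | hxs
  · have hx' : s + (pv x - s) = pv x := by omega
    refine Or.inl (Or.inr ⟨pv x - s, (hcross _ (by omega)).1 ?_, by rw [hx', hinv], hx'⟩)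
    rwa [hx', hinv]
  · have hpxs : pv x < s := by
      by_contra hge
      exact hblock x ⟨hxs, hx⟩ ⟨not_lt.1 hge, hpx⟩
    have hx' : s + (x - s) = x := by omega
    exact Or.inr (Or.inr ⟨x - s, (hcross _ (by omega)).1 (by rwa [hx']), by rw [hx'], hx'⟩)

end Block

theorem foldl_tauStep_openList :
    ∀ {s : ℕ} {ns : List ℕ} {A : List (ℕ × ℕ)}, PairFreeBlocks pv s ns →
      ContainsPairsBelow pv A s → ∃ A',
        (ns.zip (crossCounts pv s ns)).foldl tauStep (openList pv s, A, s) =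
          (openList pv (s + ns.sum), A', s + ns.sum) ∧ ContainsPairsBelow pv A' (s + ns.sum)
  | _, [], A, _, hA => ⟨A, by simpa using hA⟩
  | s, m :: ns, A, ⟨hblock, hrest⟩, hA => by
    obtain ⟨A', hfold, hA'⟩ :=
      foldl_tauStep_openList hrest (containsPairsBelow_add hinv hnc hblock hA)
    refine ⟨A', ?_, by simpa [add_assoc] using hA'⟩
    rw [crossCounts, List.zip_cons_cons, List.foldl_cons, tauStep_openList hinv hnc hblock, hfold]
    simp [add_assoc]

theorem tauDefinedAux_crossCounts :
    ∀ {s : ℕ} {ns : List ℕ}, PairFreeBlocks pv s ns →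
      tauDefinedAux (openList pv s).length (ns.zip (crossCounts pv s ns))
  | _, [], _ => trivial
  | s, m :: ns, ⟨hblock, hrest⟩ => by
    refine ⟨?_, crossCount_le s m, ?_⟩
    · rw [openList_eq_append hinv hnc hblock]
      simp
    · rw [← length_openList_add hinv hnc hblock]
      exact tauDefinedAux_crossCounts hrest

end OpenIndices

namespace Pairing

variable {N : ℕ} (P : Pairing N)

-- Extended by the identity beyond `N`, so that it is an involution of all of `ℕ`.
def partner (j : ℕ) : ℕ := if h : j < N then P.pair ⟨j, h⟩ else j

theorem partner_val (i : Fin N) : P.partner i = P.pair i := dif_pos i.isLt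

theorem partner_lt {j : ℕ} (hj : j < N) : P.partner j < N := by
  rw [partner, dif_pos hj]
  exact Fin.isLt _

theorem partner_involutive : Function.Involutive P.partner := fun j => by
  by_cases hj : j < N
  · rw [show j = ((⟨j, hj⟩ : Fin N) : ℕ) from rfl, partner_val, partner_val, P.involutive]
  · simp [partner, hj]

variable {P}

theorem IsNoncrossing.partner (hP : P.IsNoncrossing) (x y : ℕ) (hxy : x < y)
    (hy : y < P.partner x) (hxy' : P.partner x < P.partner y) : False := by
  have hxN : x < N := by
    by_contra hxN
    simp only [Pairing.partner, hxN, dite_false] at hy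
    omega
  have hyN : y < N := hy.trans (P.partner_lt hxN)
  exact hP ⟨⟨x, hxN⟩, ⟨y, hyN⟩, hxy, Fin.lt_def.2 (by rwa [← P.partner_val]),
    Fin.lt_def.2 (by rwa [← P.partner_val, ← P.partner_val])⟩

end Pairing

theorem noPairWithin_blockStartL {nn : List ℕ} {P : Pairing nn.sum} (hR : RespectsL nn P)
    {k : ℕ} (hk : k < nn.length) :
    NoPairWithin P.partner (blockStartL nn k) (blockStartL nn (k + 1)) := by
  rintro x ⟨hkx, hxk⟩ ⟨hkpx, hpxk⟩
  have hxN : x < nn.sum :=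
    hxk.trans_le ((List.take_prefix _ _).sublist.sum_le_sum fun _ _ => Nat.zero_le _)
  rw [blockStartL_succ hk] at hxk hpxk
  exact hR ⟨x, hxN⟩ k ⟨hk, hkx, hxk⟩
    ⟨hk, by rwa [← P.partner_val], by rwa [← P.partner_val]⟩

theorem exists_tau_of_isNoncrossing_of_respectsL {n0 : ℕ} {ns : List ℕ}
    {P : Pairing (n0 :: ns).sum} (hP : P.IsNoncrossing) (hR : RespectsL (n0 :: ns) P) :
    ∃ ps : List ℕ, ps.length = ns.length ∧ tauDefinedAux n0 (ns.zip ps) ∧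
      2 * ps.sum = (n0 :: ns).sum ∧ TauEqualsPairing n0 (ns.zip ps) P := by
  have hblock k (hk : k < (n0 :: ns).length) := noPairWithin_blockStartL hR hk
  have hfirst : NoPairWithin P.partner 0 n0 := by
    have := hblock 0 (Nat.succ_pos _)
    rwa [zero_add, blockStartL_cons_succ, List.take_zero, List.sum_nil, add_zero] at this
  have hblocks : PairFreeBlocks P.partner n0 ns := pairFreeBlocks_of_forall fun k hk => by
    simpa only [blockStartL_cons_succ] using hblock (k + 1) (Nat.succ_lt_succ hk)
  have hlen := length_crossCounts (pv := P.partner) n0 ns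
  obtain ⟨A, hfold, hA⟩ := foldl_tauStep_openList P.partner_involutive hP.partner hblocks
    (containsPairsBelow_nil hfirst)
  have hdef := tauDefinedAux_crossCounts P.partner_involutive hP.partner hblocks
  rw [openList_eq_range hfirst] at hdef hfold
  have hN : n0 + ns.sum = (n0 :: ns).sum := by simp
  refine ⟨_, hlen, by rwa [List.length_range] at hdef, ?_, fun i => ?_⟩
  · have := length_foldl_tauStep _ (List.range n0, [], n0) hdef
    rw [hfold, hN, openList_eq_nil fun j hj => P.partner_lt hj, List.map_fst_zip hlen.ge,
      List.map_snd_zip hlen.le] at this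
    simpa using this
  · rw [tauRun, hfold]
    rw [hN] at hA
    simpa only [P.partner_val] using hA i i.isLt (P.partner_val i ▸ (P.pair i).isLt)

theorem stmt7_general (n0 : ℕ) (ns : List ℕ)
    (P : Pairing ((n0 :: ns).sum)) :
    (P.IsNoncrossing ∧ RespectsL (n0 :: ns) P) ↔
      ∃ ps : List ℕ, ps.length = ns.length ∧
        (∀ k, k < ps.length →
          ps.getD k 0 ≤ ns.getD k 0 ∧
          ps.getD k 0 + 2 * (ps.take k).sum ≤ n0 + (ns.take k).sum) ∧
        2 * ps.sum = (n0 :: ns).sum ∧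
        TauEqualsPairing n0 (ns.zip ps) P := by
  constructor
  · rintro ⟨hP, hR⟩
    obtain ⟨ps, hlen, hdef, hsum, htau⟩ := exists_tau_of_isNoncrossing_of_respectsL hP hR
    exact ⟨ps, hlen, (tauDefinedAux_zip_iff hlen n0).1 hdef, hsum, htau⟩
  · rintro ⟨ps, hlen, hcond, -, htau⟩
    exact isNoncrossing_and_respectsL_of_tauEqualsPairing hlen
      ((tauDefinedAux_zip_iff hlen n0).2 hcond) htau

theorem stmt7 (n0 : ℕ) (ns : List ℕ) (hn0 : 1 ≤ n0) (hns : ∀ m ∈ ns, 1 ≤ m)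
    (P : Pairing ((n0 :: ns).sum)) :
    (P.IsNoncrossing ∧ RespectsL (n0 :: ns) P) ↔
      ∃ ps : List ℕ, ps.length = ns.length ∧
        (∀ k, k < ps.length →
          ps.getD k 0 ≤ ns.getD k 0 ∧
          ps.getD k 0 + 2 * (ps.take k).sum ≤ n0 + (ns.take k).sum) ∧
        2 * ps.sum = (n0 :: ns).sum ∧
        TauEqualsPairing n0 (ns.zip ps) P :=
  stmt7_general n0 ns P
end

section
/- Let n, m ≥ 1 be natural numbers and let NC₂²(n^{⊗2m}) denote the set of noncrossing pairings π of [2mn] that respect the interval partition n^{⊗2m} = n⊗⋯⊗n (2m factors) and such that every connected component of the linking graph C_π contains exactly two of the 2m blocks. Then the cardinality of NC₂²(n^{⊗2m}) equals the Catalan number C_m = (1/(m+1))·binomial(2m,m). -/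
open MeasureTheory
open scoped ENNReal

/-- `π` links the blocks `B_a` and `B_b` of the interval partition: some block of `π` has one
element in each. -/
def Links {N r : ℕ} (nn : Fin r → ℕ) (P : Pairing N) (a b : Fin r) : Prop :=
  ∃ j : Fin N, inBlock nn a (j : ℕ) ∧ inBlock nn b ((P.pair j : ℕ))

/-- The graph `C_π` on the blocks of the interval partition, with an edge when `π` links. -/
def linkGraph {N r : ℕ} (nn : Fin r → ℕ) (P : Pairing N) : SimpleGraph (Fin r) where
  Adj a b := a ≠ b ∧ (Links nn P a b ∨ Links nn P b a)
  symm := ⟨fun _ _ h => ⟨h.1.symm, h.2.symm⟩⟩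
  loopless := ⟨fun _ h => h.1 rfl⟩

/-!
A pairing in the set links each block `B_a` to exactly one other block `Q a`, so all `n` arcs
leaving `B_a` end in `B_{Q a}`. Noncrossing forces these arcs to be nested: position `k` of the
earlier block is paired with position `n - 1 - k` of the later one, and `Q` is a noncrossing
pairing of the `2m` blocks. Conversely every noncrossing pairing of the blocks arises in this
way, so we are counting noncrossing pairings of `[2m]`. Recording whether each point opens or
closes its block turns these into Dyck paths of semilength `m`; the inverse matches each up step
with the first later return of the path to the height it started from. Dyck paths are counted
by `C_m`.
-/

open Finset

namespace BoolWord

/-- `true` is an up step and `false` a down step. -/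
def step (b : Bool) : ℤ := if b then 1 else -1

def height (w : ℕ → Bool) (t : ℕ) : ℤ := ∑ k ∈ range t, step (w k)

def IsDyck (w : ℕ → Bool) (N : ℕ) : Prop := (∀ t ≤ N, 0 ≤ height w t) ∧ height w N = 0

variable {w : ℕ → Bool} {N : ℕ}

@[simp] theorem height_zero (w : ℕ → Bool) : height w 0 = 0 := by simp [height]

theorem height_succ (w : ℕ → Bool) (t : ℕ) : height w (t + 1) = height w t + step (w t) :=
  sum_range_succ _ _

theorem height_succ_of_true {t : ℕ} (h : w t = true) : height w (t + 1) = height w t + 1 := by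
  simp [height_succ, h, step]

theorem height_succ_of_false {t : ℕ} (h : w t = false) : height w (t + 1) = height w t - 1 := by
  simp [height_succ, h, step, sub_eq_add_neg]

theorem height_sub_one_le_height_succ (w : ℕ → Bool) (t : ℕ) :
    height w t - 1 ≤ height w (t + 1) := by
  rw [height_succ]; unfold step; split <;> omega

theorem height_succ_le_height_add_one (w : ℕ → Bool) (t : ℕ) :
    height w (t + 1) ≤ height w t + 1 := by
  rw [height_succ]; unfold step; split <;> omega

theorem height_sub_height {s t : ℕ} (h : s ≤ t) :
    height w t - height w s = ∑ k ∈ Ico s t, step (w k) :=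
  (sum_Ico_eq_sub _ h).symm

/-- The down step matching the up step at `i`: the first return of the path to the height it
had before `i`. -/
noncomputable def closer (w : ℕ → Bool) (i : ℕ) : ℕ :=
  sInf {j | i < j ∧ height w (j + 1) ≤ height w i}

/-- The up step matching the down step at `j`: the last time before `j` at which the path was
at the height it reaches after `j`. -/
noncomputable def opener (w : ℕ → Bool) (j : ℕ) : ℕ :=
  sSup {i | i < j ∧ height w i ≤ height w (j + 1)}

noncomputable def matching (w : ℕ → Bool) (k : ℕ) : ℕ := if w k then closer w k else opener w k

theorem closer_spec (hw : IsDyck w N) {i : ℕ} (hi : i < N) (hwi : w i = true) :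
    i < closer w i ∧ closer w i < N ∧ height w (closer w i + 1) = height w i ∧
      ∀ k, i < k → k ≤ closer w i → height w i < height w k := by
  have hup := height_succ_of_true hwi
  have h0 := hw.1 i hi.le
  have hlast : i < N - 1 ∧ height w (N - 1 + 1) ≤ height w i := by
    refine ⟨?_, by rw [Nat.sub_add_cancel (by omega), hw.2]; exact h0⟩
    by_contra h
    have := hw.2
    rw [show N = i + 1 by omega] at this
    omega
  have hmem : i < closer w i ∧ height w (closer w i + 1) ≤ height w i :=
    Nat.sInf_mem (s := {j | i < j ∧ height w (j + 1) ≤ height w i}) ⟨N - 1, hlast⟩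
  have hle : closer w i ≤ N - 1 := Nat.sInf_le hlast
  have hmin : ∀ k, i < k → k ≤ closer w i → height w i < height w k := by
    intro k hik hk
    obtain rfl | hik := (show i + 1 ≤ k by omega).eq_or_lt
    · omega
    obtain ⟨j, rfl⟩ := Nat.exists_eq_add_of_lt hik
    have : ¬ (i < i + 1 + j ∧ height w (i + 1 + j + 1) ≤ height w i) :=
      Nat.notMem_of_lt_sInf (show i + 1 + j < closer w i by omega)
    omega
  have := height_sub_one_le_height_succ w (closer w i)
  have := hmin _ hmem.1 le_rfl
  exact ⟨hmem.1, by omega, by omega, hmin⟩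

theorem opener_spec (hw : IsDyck w N) {j : ℕ} (hj : j < N) (hwj : w j = false) :
    opener w j < j ∧ height w (opener w j) = height w (j + 1) ∧
      ∀ k, opener w j < k → k ≤ j → height w (j + 1) < height w k := by
  have hdown := height_succ_of_false hwj
  have h0 := hw.1 (j + 1) hj
  have hfirst : 0 < j ∧ height w 0 ≤ height w (j + 1) := by
    refine ⟨?_, by simpa using h0⟩
    by_contra h
    obtain rfl : j = 0 := by omega
    simp only [height_zero] at hdown
    omega
  have hbdd : BddAbove {i | i < j ∧ height w i ≤ height w (j + 1)} :=
    ⟨j, fun _ hx => hx.1.le⟩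
  have hmem : opener w j < j ∧ height w (opener w j) ≤ height w (j + 1) :=
    Nat.sSup_mem ⟨0, hfirst⟩ hbdd
  have hmax : ∀ k, opener w j < k → k ≤ j → height w (j + 1) < height w k := by
    intro k hk hkj
    obtain rfl | hkj := hkj.eq_or_lt
    · omega
    have : ¬ (k < j ∧ height w k ≤ height w (j + 1)) :=
      notMem_of_csSup_lt (s := {i | i < j ∧ height w i ≤ height w (j + 1)}) hk hbdd
    omega
  have := height_succ_le_height_add_one w (opener w j)
  have := hmax (opener w j + 1) (by omega) hmem.1
  exact ⟨hmem.1, by omega, hmax⟩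

section Matching

variable (hw : IsDyck w N)
include hw

theorem closer_eq_false {i : ℕ} (hi : i < N) (hwi : w i = true) : w (closer w i) = false := by
  obtain ⟨hic, -, hret, hmin⟩ := closer_spec hw hi hwi
  have := hmin _ hic le_rfl
  by_contra h
  have := height_succ_of_true (Bool.not_eq_false _ ▸ h)
  omega

theorem opener_eq_true {j : ℕ} (hj : j < N) (hwj : w j = false) : w (opener w j) = true := by
  obtain ⟨hoj, hret, hmax⟩ := opener_spec hw hj hwj
  have := hmax _ (by omega : opener w j < opener w j + 1) hoj
  by_contra h
  have := height_succ_of_false (Bool.not_eq_true _ ▸ h)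
  omega

theorem opener_closer {i : ℕ} (hi : i < N) (hwi : w i = true) : opener w (closer w i) = i := by
  obtain ⟨hic, hcN, hret, hmin⟩ := closer_spec hw hi hwi
  obtain ⟨hoc, hret', hmax⟩ := opener_spec hw hcN (closer_eq_false hw hi hwi)
  rcases lt_trichotomy (opener w (closer w i)) i with h | h | h
  · have := hmax i h hic.le; omega
  · exact h
  · have := hmin _ h hoc.le; omega

theorem closer_opener {j : ℕ} (hj : j < N) (hwj : w j = false) : closer w (opener w j) = j := by
  obtain ⟨hoj, hret, hmax⟩ := opener_spec hw hj hwj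
  obtain ⟨hoc, -, hret', hmin⟩ := closer_spec hw (hoj.trans hj) (opener_eq_true hw hj hwj)
  rcases lt_trichotomy (closer w (opener w j)) j with h | h | h
  · have := hmax (closer w (opener w j) + 1) (by omega) h; omega
  · exact h
  · have := hmin (j + 1) (by omega) h; omega

theorem lt_matching_iff {k : ℕ} (hk : k < N) : k < matching w k ↔ w k = true := by
  unfold matching
  cases hwk : w k
  · simpa using (opener_spec hw hk hwk).1.le
  · simpa using (closer_spec hw hk hwk).1

theorem matching_lt {k : ℕ} (hk : k < N) : matching w k < N := by
  unfold matching
  cases hwk : w k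
  · simpa using (opener_spec hw hk hwk).1.trans hk
  · simpa using (closer_spec hw hk hwk).2.1

theorem matching_ne {k : ℕ} (hk : k < N) : matching w k ≠ k := by
  unfold matching
  cases hwk : w k
  · simpa using (opener_spec hw hk hwk).1.ne
  · simpa using (closer_spec hw hk hwk).1.ne'

theorem matching_matching {k : ℕ} (hk : k < N) : matching w (matching w k) = k := by
  unfold matching
  cases hwk : w k
  · simp [opener_eq_true hw hk hwk, closer_opener hw hk hwk]
  · simp [closer_eq_false hw hk hwk, opener_closer hw hk hwk]

theorem not_matching_crossing {i j : ℕ} (hi : i < N) (hj : j < N) (hij : i < j)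
    (hji : j < matching w i) (hmatch : matching w i < matching w j) : False := by
  have hwi := (lt_matching_iff hw hi).1 (hij.trans hji)
  have hwj := (lt_matching_iff hw hj).1 (hji.trans hmatch)
  simp only [matching, hwi, hwj, if_true] at hji hmatch
  obtain ⟨-, -, hret, hmin⟩ := closer_spec hw hi hwi
  have := hmin j hij hji.le
  have := (closer_spec hw hj hwj).2.2.2 (closer w i + 1) (by omega) hmatch
  omega

end Matching

open DyckStep

def toSteps (w : ℕ → Bool) (N : ℕ) : List DyckStep :=
  (List.range N).map fun k => if w k then U else D

def ofSteps (l : List DyckStep) (k : ℕ) : Bool := decide (l[k]? = some U)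

@[simp] theorem length_toSteps (w : ℕ → Bool) (N : ℕ) : (toSteps w N).length = N := by
  simp [toSteps]

theorem take_toSteps {t : ℕ} (ht : t ≤ N) : (toSteps w N).take t = toSteps w t := by
  simp [toSteps, ← List.map_take, List.take_range, min_eq_left ht]

theorem count_U_sub_count_D_toSteps (w : ℕ → Bool) (t : ℕ) :
    ((toSteps w t).count U : ℤ) - (toSteps w t).count D = height w t := by
  induction t with
  | zero => simp [toSteps]
  | succ t ih =>
    rw [height_succ, ← ih]
    cases h : w t <;> simp [toSteps, List.range_succ, h, step] <;> ring

theorem toSteps_congr {w' : ℕ → Bool} (h : ∀ k < N, w k = w' k) : toSteps w N = toSteps w' N :=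
  List.map_congr_left fun k hk => by rw [h k (List.mem_range.1 hk)]

theorem toSteps_ofSteps (l : List DyckStep) : toSteps (ofSteps l) l.length = l := by
  refine List.ext_getElem (by simp) fun k hk _ => ?_
  simp only [toSteps, ofSteps, List.getElem_map, List.getElem_range]
  rw [List.getElem?_eq_getElem (by simpa using hk)]
  rcases l[k].dichotomy with h | h <;> simp [h]

theorem isDyck_ofSteps (p : DyckWord) : IsDyck (ofSteps p.toList) p.toList.length := by
  have hcount : ∀ t ≤ p.toList.length, height (ofSteps p.toList) t =
      ((p.toList.take t).count U : ℤ) - (p.toList.take t).count D := fun t ht => by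
    conv_rhs => rw [← toSteps_ofSteps p.toList, take_toSteps ht]
    rw [count_U_sub_count_D_toSteps]
  refine ⟨fun t ht => ?_, ?_⟩
  · rw [hcount t ht]
    have := p.count_D_le_count_U t
    omega
  · rw [hcount _ le_rfl, List.take_length, p.count_U_eq_count_D, sub_self]

end BoolWord

namespace Pairing

open BoolWord DyckStep

variable {N : ℕ}

@[ext] theorem ext {P Q : Pairing N} (h : P.pair = Q.pair) : P = Q := by
  cases P; cases Q; congr

def natPair (P : Pairing N) (k : ℕ) : ℕ := if h : k < N then P.pair ⟨k, h⟩ else k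

def word (P : Pairing N) (k : ℕ) : Bool := decide (k < P.natPair k)

noncomputable def ofDyck (w : ℕ → Bool) (hw : IsDyck w N) : Pairing N where
  pair k := ⟨matching w k, matching_lt hw k.2⟩
  involutive k := Fin.ext (matching_matching hw k.2)
  fixedFree k h := matching_ne hw k.2 (congrArg Fin.val h)

section Word

variable (P : Pairing N)

@[simp] theorem natPair_val (k : Fin N) : P.natPair k = P.pair k := by simp [natPair]

theorem natPair_of_le {k : ℕ} (hk : N ≤ k) : P.natPair k = k := by simp [natPair, not_lt.2 hk]

theorem natPair_lt {k : ℕ} (hk : k < N) : P.natPair k < N := by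
  simp [natPair, hk]

theorem natPair_natPair {k : ℕ} (hk : k < N) : P.natPair (P.natPair k) = k := by
  simp [natPair, hk, P.involutive]

theorem natPair_ne {k : ℕ} (hk : k < N) : P.natPair k ≠ k := by
  simpa [natPair, hk, Fin.ext_iff] using P.fixedFree ⟨k, hk⟩

theorem word_natPair {k : ℕ} (hk : k < N) : P.word (P.natPair k) = !P.word k := by
  unfold word
  rw [P.natPair_natPair hk]
  rcases lt_or_gt_of_ne (P.natPair_ne hk) with h | h <;> simp [h, lt_asymm h]

/-- Blocks inside `S` contribute `0` to the sum, so only the blocks leaving `S` count. -/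
theorem sum_step_word_eq_card {S : Finset ℕ} (hS : ∀ k ∈ S, k < N)
    (hout : ∀ k ∈ S, P.natPair k ∉ S → k < P.natPair k) :
    ∑ k ∈ S, step (P.word k) = #{k ∈ S | P.natPair k ∉ S} := by
  rw [← sum_filter_add_sum_filter_not S (fun k => P.natPair k ∈ S)]
  have hin : ∑ k ∈ S with P.natPair k ∈ S, step (P.word k) = 0 := by
    refine sum_involution (fun k _ => P.natPair k) (fun k hk => ?_) (fun k hk _ => ?_)
      (fun k hk => ?_) (fun k hk => ?_)
    · rw [P.word_natPair (hS k (mem_filter.1 hk).1)]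
      cases P.word k <;> simp [step]
    · exact P.natPair_ne (hS k (mem_filter.1 hk).1)
    · have hk := mem_filter.1 hk
      simpa [P.natPair_natPair (hS k hk.1)] using And.intro hk.2 hk.1
    · exact P.natPair_natPair (hS k (mem_filter.1 hk).1)
  have hleave : ∀ k ∈ S.filter (fun k => P.natPair k ∉ S), step (P.word k) = 1 := by
    intro k hk
    have hk := mem_filter.1 hk
    simp [step, word, hout k hk.1 hk.2]
  rw [hin, sum_congr rfl hleave]
  simp

theorem isDyck_word : IsDyck P.word N := by
  constructor
  · intro t ht
    rw [height, P.sum_step_word_eq_card (fun k hk => (mem_range.1 hk).trans_le ht)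
      (fun k hk hout => by rw [mem_range] at hk hout; omega)]
    positivity
  · rw [height, P.sum_step_word_eq_card (fun k hk => mem_range.1 hk)
      (fun k hk hout => absurd (mem_range.2 (P.natPair_lt (mem_range.1 hk))) hout),
      filter_false_of_mem fun k hk => not_not.2 (mem_range.2 (P.natPair_lt (mem_range.1 hk)))]
    rfl

theorem ofSteps_toSteps_word : ofSteps (toSteps P.word N) = P.word := by
  funext k
  rcases lt_or_ge k N with hk | hk
  · simp [ofSteps, toSteps, hk]
  · simp [ofSteps, toSteps, hk, word, P.natPair_of_le hk]

def dyckWord : DyckWord where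
  toList := toSteps P.word N
  count_U_eq_count_D := by
    have := count_U_sub_count_D_toSteps P.word N
    rw [P.isDyck_word.2] at this
    omega
  count_D_le_count_U t := by
    rcases le_total t N with ht | ht
    · have := count_U_sub_count_D_toSteps P.word t
      have := P.isDyck_word.1 t ht
      rw [take_toSteps ht]
      omega
    · have := count_U_sub_count_D_toSteps P.word N
      have := P.isDyck_word.2
      rw [List.take_of_length_le (by simpa using ht)]
      omega

end Word

section Noncrossing

variable {P : Pairing N} (hP : P.IsNoncrossing)
include hP

theorem IsNoncrossing.natPair_not_lt {x y : ℕ} (hy : y < N) (hxy : x < y)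
    (hyx : y < P.natPair x) : ¬ P.natPair x < P.natPair y := by
  intro h
  have hx : x < N := hxy.trans hy
  exact hP ⟨⟨x, hx⟩, ⟨y, hy⟩, hxy, by rw [Fin.lt_def]; simpa [natPair, hx] using hyx,
    by rw [Fin.lt_def]; simpa [natPair, hx, hy] using h⟩

theorem IsNoncrossing.natPair_mem_Ioo {i k : ℕ} (hi : i < N) (hik : i < k)
    (hki : k < P.natPair i) : P.natPair k ∈ Set.Ioo i (P.natPair i) := by
  have hk : k < N := hki.trans (P.natPair_lt hi)
  have hkk := P.natPair_natPair hk
  have hii := P.natPair_natPair hi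
  rcases lt_trichotomy (P.natPair k) i with h | h | h
  · exact (hP.natPair_not_lt hi h (by omega) (by omega)).elim
  · rw [← h, hkk] at hki; omega
  · rcases lt_trichotomy (P.natPair k) (P.natPair i) with h' | h' | h'
    · exact ⟨h, h'⟩
    · have := congrArg P.natPair h'; rw [hkk, hii] at this; omega
    · exact (hP.natPair_not_lt hk hik hki h').elim

theorem IsNoncrossing.height_natPair_succ {i : ℕ} (hi : i < N) (hop : i < P.natPair i) :
    height P.word (P.natPair i + 1) = height P.word i := by
  have hπ := P.natPair_lt hi
  have hii := P.natPair_natPair hi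
  have hclosed : ∀ k ∈ Ico i (P.natPair i + 1), P.natPair k ∈ Ico i (P.natPair i + 1) := by
    intro k hk
    rw [mem_Ico] at hk ⊢
    rcases hk.1.eq_or_lt with rfl | hik
    · omega
    rcases (Nat.lt_succ_iff.1 hk.2).eq_or_lt with rfl | hki
    · omega
    obtain ⟨h1, h2⟩ := hP.natPair_mem_Ioo hi hik hki
    omega
  have h := height_sub_height (w := P.word) (show i ≤ P.natPair i + 1 by omega)
  rw [P.sum_step_word_eq_card (fun k hk => by rw [mem_Ico] at hk; omega)
    (fun k hk hout => (hout (hclosed k hk)).elim),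
    filter_false_of_mem fun k hk => not_not.2 (hclosed k hk)] at h
  simpa [sub_eq_zero] using h

theorem IsNoncrossing.height_lt_of_lt_natPair {i j : ℕ} (hi : i < N) (hij : i < j)
    (hji : j < P.natPair i) : height P.word i < height P.word (j + 1) := by
  have hπ := P.natPair_lt hi
  have h := height_sub_height (w := P.word) (show i ≤ j + 1 by omega)
  rw [P.sum_step_word_eq_card (fun k hk => by rw [mem_Ico] at hk; omega)
    (fun k hk hout => ?_)] at h
  · have : 0 < #{k ∈ Ico i (j + 1) | P.natPair k ∉ Ico i (j + 1)} :=
      card_pos.2 ⟨i, by simp only [mem_filter, mem_Ico]; omega⟩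
    omega
  · rw [mem_Ico] at hk hout
    rcases hk.1.eq_or_lt with rfl | hik
    · omega
    obtain ⟨h1, h2⟩ := hP.natPair_mem_Ioo hi hik (by omega)
    omega

theorem IsNoncrossing.closer_word {i : ℕ} (hi : i < N) (hop : i < P.natPair i) :
    closer P.word i = P.natPair i := by
  have hwi : P.word i = true := by simpa [word] using hop
  obtain ⟨hic, -, hret, hmin⟩ := closer_spec P.isDyck_word hi hwi
  rcases lt_trichotomy (closer P.word i) (P.natPair i) with h | h | h
  · have := hP.height_lt_of_lt_natPair hi hic h; omega
  · exact h
  · have := hmin (P.natPair i + 1) (by omega) h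
    rw [hP.height_natPair_succ hi hop] at this
    omega

theorem IsNoncrossing.matching_word {k : ℕ} (hk : k < N) : matching P.word k = P.natPair k := by
  unfold matching
  cases hwk : P.word k
  · have hπ := P.natPair_lt hk
    have hlt : P.natPair k < k := by
      simp only [word, decide_eq_false_iff_not, not_lt] at hwk
      exact lt_of_le_of_ne hwk (P.natPair_ne hk)
    have hop : P.natPair k < P.natPair (P.natPair k) := by rwa [P.natPair_natPair hk]
    have hclose := hP.closer_word hπ hop
    rw [P.natPair_natPair hk] at hclose
    simpa [hclose] using opener_closer P.isDyck_word hπ (by simpa [word] using hop)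
  · simpa using hP.closer_word hk (by simpa [word] using hwk)

end Noncrossing

theorem ofDyck_isNoncrossing {w : ℕ → Bool} (hw : IsDyck w N) : (ofDyck w hw).IsNoncrossing :=
  fun ⟨i, j, hij, hji, hmatch⟩ => not_matching_crossing hw i.2 j.2 hij hji hmatch

theorem word_ofDyck {w : ℕ → Bool} (hw : IsDyck w N) {k : ℕ} (hk : k < N) :
    (ofDyck w hw).word k = w k := by
  simp [word, natPair, hk, ofDyck, lt_matching_iff hw hk]

noncomputable def noncrossingEquivDyckWord (m : ℕ) :
    {P : Pairing (2 * m) // P.IsNoncrossing} ≃ {p : DyckWord // p.semilength = m} where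
  toFun P := ⟨P.1.dyckWord, by
    have := P.1.dyckWord.two_mul_semilength_eq_length
    rw [show P.1.dyckWord.toList.length = 2 * m from length_toSteps _ _] at this
    omega⟩
  invFun p := ⟨ofDyck (ofSteps p.1.toList) (by
      simpa [← p.1.two_mul_semilength_eq_length, p.2] using isDyck_ofSteps p.1),
    ofDyck_isNoncrossing _⟩
  left_inv P := by
    ext k
    simp only [ofDyck, dyckWord, ofSteps_toSteps_word]
    rw [← P.1.natPair_val, P.2.matching_word k.2]
  right_inv p := by
    refine Subtype.ext (DyckWord.ext ?_)
    have hlen : p.1.toList.length = 2 * m := by rw [← p.1.two_mul_semilength_eq_length, p.2]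
    simp only [dyckWord]
    rw [toSteps_congr (fun k hk => word_ofDyck _ hk), ← hlen, toSteps_ofSteps]

theorem card_isNoncrossing_eq_catalan (m : ℕ) :
    Nat.card {P : Pairing (2 * m) // P.IsNoncrossing} = catalan m := by
  rw [Nat.card_congr (noncrossingEquivDyckWord m), Nat.card_eq_fintype_card,
    DyckWord.card_dyckWord_semilength_eq_catalan]

end Pairing

namespace SimpleGraph

variable {V : Type*} {G : SimpleGraph V}

theorem eq_of_adj_of_card_reachable_eq_two {a b c : V}
    (h : Nat.card {x // G.Reachable a x} = 2) (hb : G.Adj a b) (hc : G.Adj a c) : b = c := by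
  obtain ⟨y, -, huniq⟩ := (Nat.card_eq_two_iff' ⟨a, Reachable.refl a⟩).1 h
  have hby := huniq ⟨b, hb.reachable⟩ fun e => hb.ne (congrArg Subtype.val e).symm
  have hcy := huniq ⟨c, hc.reachable⟩ fun e => hc.ne (congrArg Subtype.val e).symm
  exact congrArg Subtype.val (hby.trans hcy.symm)

theorem reachable_iff_of_adj_iff {f : V → V} (hf : Function.Involutive f)
    (hadj : ∀ a b, G.Adj a b ↔ b = f a) {a b : V} : G.Reachable a b ↔ b = a ∨ b = f a := by
  refine ⟨fun h => ?_, ?_⟩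
  · obtain ⟨p⟩ := h
    induction p with
    | nil => exact Or.inl rfl
    | cons h _ ih =>
      rw [(hadj _ _).1 h] at ih
      rcases ih with ih | ih
      · exact Or.inr ih
      · exact Or.inl (ih.trans (hf _))
  · rintro (rfl | rfl)
    · exact Reachable.refl _
    · exact ((hadj _ _).2 rfl).reachable

theorem card_reachable_of_adj_iff {f : V → V} (hf : Function.Involutive f)
    (hadj : ∀ a b, G.Adj a b ↔ b = f a) (a : V) (ha : f a ≠ a) :
    Nat.card {b // G.Reachable a b} = 2 := by
  rw [Nat.card_eq_two_iff]
  refine ⟨⟨a, Reachable.refl a⟩, ⟨f a, ((hadj _ _).2 rfl).reachable⟩,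
    fun e => ha (congrArg Subtype.val e).symm, Set.eq_univ_of_forall fun ⟨b, hb⟩ => ?_⟩
  rcases (reachable_iff_of_adj_iff hf hadj).1 hb with rfl | rfl <;> simp

end SimpleGraph

section Blocks

variable {r n : ℕ}

theorem inBlock_iff_divNat {a : Fin r} {x : Fin (r * n)} :
    inBlock (fun _ : Fin r => n) a x ↔ x.divNat = a := by
  have hn : 0 < n := Nat.pos_of_mul_pos_left (Nat.zero_lt_of_lt x.2)
  rw [inBlock, blockStart, sum_const, Fin.card_Iio, smul_eq_mul, Fin.ext_iff, Fin.coe_divNat,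
    Nat.div_eq_iff hn]
  omega

theorem respects_iff {P : Pairing (r * n)} :
    Respects (fun _ : Fin r => n) P ↔ ∀ x, (P.pair x).divNat ≠ x.divNat := by
  simp [Respects, inBlock_iff_divNat]

theorem links_iff {P : Pairing (r * n)} {a b : Fin r} :
    Links (fun _ : Fin r => n) P a b ↔ ∃ x, x.divNat = a ∧ (P.pair x).divNat = b := by
  simp [Links, inBlock_iff_divNat]

theorem adj_linkGraph_iff {P : Pairing (r * n)} (hR : Respects (fun _ : Fin r => n) P)
    {a b : Fin r} :
    (linkGraph (fun _ : Fin r => n) P).Adj a b ↔ ∃ x, x.divNat = a ∧ (P.pair x).divNat = b := by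
  refine ⟨fun ⟨_, h⟩ => ?_, fun h => ⟨?_, Or.inl (links_iff.2 h)⟩⟩
  · rcases h with h | h
    · exact links_iff.1 h
    · obtain ⟨x, rfl, rfl⟩ := links_iff.1 h
      exact ⟨P.pair x, rfl, by rw [P.involutive]⟩
  · obtain ⟨x, rfl, rfl⟩ := h
    exact (respects_iff.1 hR x).symm

theorem Fin.lt_of_divNat_lt {x y : Fin (r * n)} (h : x.divNat < y.divNat) : x < y :=
  Nat.lt_of_div_lt_div h

theorem Fin.divNat_le_divNat {x y : Fin (r * n)} (h : x ≤ y) : x.divNat ≤ y.divNat :=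
  Nat.div_le_div_right h

theorem Fin.lt_iff_modNat_lt {x y : Fin (r * n)} (h : x.divNat = y.divNat) :
    x < y ↔ x.modNat < y.modNat := by
  have hx := Nat.div_add_mod x n
  have hy := Nat.div_add_mod y n
  rw [show (x : ℕ) / n = y / n from congrArg Fin.val h] at hx
  rw [Fin.lt_def, Fin.lt_def, Fin.coe_modNat, Fin.coe_modNat]
  omega

end Blocks

namespace Pairing

variable {r n : ℕ}

/-- Position `k` of the block `B_a` is paired with position `n - 1 - k` of the block
`B_{Q a}`. -/
def rainbow (Q : Pairing r) (n : ℕ) : Pairing (r * n) where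
  pair x := Fin.mkDivMod (Q.pair x.divNat) x.modNat.rev
  involutive x := by simp [Q.involutive]
  fixedFree x h := Q.fixedFree x.divNat (by simpa using congrArg Fin.divNat h)

@[simp] theorem divNat_rainbow (Q : Pairing r) (x : Fin (r * n)) :
    ((Q.rainbow n).pair x).divNat = Q.pair x.divNat := by
  simp [rainbow]

@[simp] theorem modNat_rainbow (Q : Pairing r) (x : Fin (r * n)) :
    ((Q.rainbow n).pair x).modNat = x.modNat.rev := by
  simp [rainbow]

theorem respects_rainbow (Q : Pairing r) : Respects (fun _ : Fin r => n) (Q.rainbow n) :=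
  respects_iff.2 fun x => by simpa using Q.fixedFree x.divNat

theorem IsNoncrossing.rainbow {Q : Pairing r} (hQ : Q.IsNoncrossing) :
    (Q.rainbow n).IsNoncrossing := by
  rintro ⟨x, y, hxy, hyx, hxy'⟩
  have hab := Fin.divNat_le_divNat hxy.le
  have hbQa := Fin.divNat_le_divNat hyx.le
  have hQab := Fin.divNat_le_divNat hxy'.le
  simp only [divNat_rainbow] at hbQa hQab
  rcases hab.eq_or_lt with hab | hab
  · rw [Fin.lt_iff_modNat_lt hab] at hxy
    rw [Fin.lt_iff_modNat_lt (by simp [hab])] at hxy'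
    simp only [modNat_rainbow, Fin.rev_lt_rev] at hxy'
    exact lt_asymm hxy hxy'
  rcases hbQa.eq_or_lt with hbQa | hbQa
  · rw [hbQa, Q.involutive] at hQab
    rw [hbQa] at hab
    exact absurd (hab.trans_le hQab) (lt_irrefl _)
  rcases hQab.eq_or_lt with hQab | hQab
  · have := congrArg Q.pair hQab
    rw [Q.involutive, Q.involutive] at this
    exact absurd this hab.ne
  exact hQ ⟨_, _, hab, hbQa, hQab⟩

theorem adj_linkGraph_rainbow_iff (hn : 0 < n) (Q : Pairing r) {a b : Fin r} :
    (linkGraph (fun _ : Fin r => n) (Q.rainbow n)).Adj a b ↔ b = Q.pair a := by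
  rw [adj_linkGraph_iff Q.respects_rainbow]
  refine ⟨fun ⟨x, hx, hb⟩ => by simp [← hb, hx], fun hb => ⟨Fin.mkDivMod a ⟨0, hn⟩, ?_⟩⟩
  simp [hb]

theorem card_reachable_rainbow (hn : 0 < n) (Q : Pairing r) (a : Fin r) :
    Nat.card {b // (linkGraph (fun _ : Fin r => n) (Q.rainbow n)).Reachable a b} = 2 :=
  SimpleGraph.card_reachable_of_adj_iff Q.involutive
    (fun _ _ => adj_linkGraph_rainbow_iff hn Q) a (Q.fixedFree a)

variable {P : Pairing (r * n)}

theorem divNat_pair_eq_of_card_reachable (hR : Respects (fun _ : Fin r => n) P)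
    (hC : ∀ a : Fin r, Nat.card {b // (linkGraph (fun _ : Fin r => n) P).Reachable a b} = 2)
    {x y : Fin (r * n)} (h : x.divNat = y.divNat) : (P.pair x).divNat = (P.pair y).divNat :=
  SimpleGraph.eq_of_adj_of_card_reachable_eq_two (hC x.divNat)
    ((adj_linkGraph_iff hR).2 ⟨x, rfl, rfl⟩) ((adj_linkGraph_iff hR).2 ⟨y, h.symm, rfl⟩)

section Quotient

variable (hn : 0 < n) (hR : ∀ x, (P.pair x).divNat ≠ x.divNat)
  (hblk : ∀ x y : Fin (r * n), x.divNat = y.divNat → (P.pair x).divNat = (P.pair y).divNat)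

def quotient : Pairing r where
  pair a := (P.pair (Fin.mkDivMod a ⟨0, hn⟩)).divNat
  involutive a := by
    rw [hblk _ (P.pair (Fin.mkDivMod a ⟨0, hn⟩)) (by simp), P.involutive, Fin.divNat_mkDivMod]
  fixedFree a h := hR (Fin.mkDivMod a ⟨0, hn⟩) (by simpa using h)

include hblk in
theorem divNat_pair (x : Fin (r * n)) :
    (P.pair x).divNat = (quotient hn hR hblk).pair x.divNat :=
  hblk x (Fin.mkDivMod x.divNat ⟨0, hn⟩) (by simp)

theorem IsNoncrossing.quotient (hP : P.IsNoncrossing) : (quotient hn hR hblk).IsNoncrossing := by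
  rintro ⟨a, b, hab, hba, hab'⟩
  refine hP ⟨Fin.mkDivMod a ⟨0, hn⟩, Fin.mkDivMod b ⟨0, hn⟩, Fin.lt_of_divNat_lt ?_,
    Fin.lt_of_divNat_lt ?_, Fin.lt_of_divNat_lt ?_⟩ <;>
    simpa [divNat_pair hn hR hblk]

theorem strictAnti_modNat_pair (hP : P.IsNoncrossing) {a : Fin r}
    (ha : a < (quotient hn hR hblk).pair a) :
    StrictAnti fun k : Fin n => (P.pair (Fin.mkDivMod a k)).modNat := by
  intro k l hkl
  have hsame : (P.pair (Fin.mkDivMod a l)).divNat = (P.pair (Fin.mkDivMod a k)).divNat :=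
    hblk _ _ (by simp)
  rw [← Fin.lt_iff_modNat_lt hsame]
  have hlt : Fin.mkDivMod a k < Fin.mkDivMod a l := by
    rwa [Fin.lt_iff_modNat_lt (by simp), Fin.modNat_mkDivMod, Fin.modNat_mkDivMod]
  have hinside : Fin.mkDivMod a l < P.pair (Fin.mkDivMod a k) :=
    Fin.lt_of_divNat_lt (by simpa [divNat_pair hn hR hblk] using ha)
  have hne : P.pair (Fin.mkDivMod a l) ≠ P.pair (Fin.mkDivMod a k) := fun h => by
    have := congrArg P.pair h
    rw [P.involutive, P.involutive] at this
    exact hlt.ne' this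
  exact lt_of_le_of_ne (not_lt.1 fun h => hP ⟨_, _, hlt, hinside, h⟩) hne

theorem pair_eq_rainbow_of_lt (hP : P.IsNoncrossing) {x : Fin (r * n)}
    (hx : x.divNat < (quotient hn hR hblk).pair x.divNat) :
    P.pair x = ((quotient hn hR hblk).rainbow n).pair x := by
  have hmono : StrictMono fun k : Fin n => (P.pair (Fin.mkDivMod x.divNat k)).modNat.rev :=
    fun k l hkl => Fin.rev_lt_rev.2 (strictAnti_modNat_pair hn hR hblk hP hx hkl)
  have hmod : (P.pair x).modNat = x.modNat.rev := by
    simpa using congrArg Fin.rev (congrFun hmono.eq_id x.modNat)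
  rw [← Fin.divNat_mkDivMod_modNat (P.pair x),
    ← Fin.divNat_mkDivMod_modNat (((quotient hn hR hblk).rainbow n).pair x),
    divNat_rainbow, modNat_rainbow, divNat_pair hn hR hblk, hmod]

theorem eq_rainbow_quotient (hP : P.IsNoncrossing) : P = (quotient hn hR hblk).rainbow n := by
  set Q := quotient hn hR hblk
  refine Pairing.ext (funext fun x => ?_)
  rcases lt_or_gt_of_ne (Q.fixedFree x.divNat).symm with hx | hx
  · exact pair_eq_rainbow_of_lt hn hR hblk hP hx
  · have hy : ((Q.rainbow n).pair x).divNat < Q.pair ((Q.rainbow n).pair x).divNat := by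
      simpa [Q.involutive] using hx
    have hxy := pair_eq_rainbow_of_lt hn hR hblk hP hy
    rw [(Q.rainbow n).involutive] at hxy
    conv_lhs => rw [← hxy]
    exact P.involutive _

end Quotient

noncomputable def equivNoncrossingOfCardReachable (hn : 0 < n) :
    {P : Pairing (r * n) // Respects (fun _ : Fin r => n) P ∧ P.IsNoncrossing ∧
      ∀ a : Fin r,
        Nat.card {b : Fin r // (linkGraph (fun _ : Fin r => n) P).Reachable a b} = 2} ≃
    {Q : Pairing r // Q.IsNoncrossing} where
  toFun P := ⟨_, P.2.2.1.quotient hn (respects_iff.1 P.2.1)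
    (fun _ _ => divNat_pair_eq_of_card_reachable P.2.1 P.2.2.2)⟩
  invFun Q := ⟨Q.1.rainbow n, respects_rainbow Q.1, Q.2.rainbow, card_reachable_rainbow hn Q.1⟩
  left_inv P := Subtype.ext (eq_rainbow_quotient hn (respects_iff.1 P.2.1)
    (fun _ _ => divNat_pair_eq_of_card_reachable P.2.1 P.2.2.2) P.2.2.1).symm
  right_inv Q := Subtype.ext (Pairing.ext (funext fun a => by simp [quotient]))

end Pairing

theorem stmt10_general (n m : ℕ) (hn : 1 ≤ n) :
    Nat.card {P : Pairing (2 * m * n) //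
        Respects (fun _ : Fin (2 * m) => n) P ∧ P.IsNoncrossing ∧
        ∀ a : Fin (2 * m),
          Nat.card {b : Fin (2 * m) //
            (linkGraph (fun _ : Fin (2 * m) => n) P).Reachable a b} = 2} =
      catalan m := by
  rw [Nat.card_congr (Pairing.equivNoncrossingOfCardReachable hn),
    Pairing.card_isNoncrossing_eq_catalan]

theorem stmt10 (n m : ℕ) (hn : 1 ≤ n) (hm : 1 ≤ m) :
    Nat.card {P : Pairing (2 * m * n) //
        Respects (fun _ : Fin (2 * m) => n) P ∧ P.IsNoncrossing ∧
        ∀ a : Fin (2 * m),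
          Nat.card {b : Fin (2 * m) //
            (linkGraph (fun _ : Fin (2 * m) => n) P).Reachable a b} = 2} =
      catalan m :=
  stmt10_general n m hn
end

section
/- Let f ∈ L²(ℝ₊²) be mirror symmetric and let f̄ denote the pointwise complex conjugate of f. Then ‖f ⌢₁ f̄‖_{L²(ℝ₊²)} = ‖f̄ ⌢₁ f‖_{L²(ℝ₊²)} ≤ ‖f ⌢₁ f‖_{L²(ℝ₊²)}. -/
open MeasureTheory

/-- Lebesgue measure on `ℝ₊²`. -/
noncomputable def m2 : Measure (ℝ × ℝ) := mplus.prod mplus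

/-- The first contraction `(f ⌢₁ g)(t₁,t₂) = ∫₀^∞ f(t₁,s) g(s,t₂) ds`. -/
noncomputable def contr1 (f g : ℝ × ℝ → ℂ) : ℝ × ℝ → ℂ :=
  fun t => ∫ s, f (t.1, s) * g (s, t.2) ∂mplus

/-!
Write `f gᵀ` for the kernel `(q₁, q₂) ↦ ∫ f(q₁, s) g(q₂, s) ds`. Since `f ⌢₁ g = f (g ∘ swap)ᵀ`,
mirror symmetry turns the three contractions into `f fᵀ`, `f̄ f̄ᵀ = conj (f fᵀ)` and `f f̄ᵀ`.
By Fubini, `‖f gᵀ‖₂² = ∫ K_f K_g` with `K_f(s, u) = ∫ f(t, s) conj f(t, u) dt`, and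
`K_f̄ = conj K_f`, so `‖f fᵀ‖₂² = Re ∫ K_f² ≤ ∫ |K_f|² = ‖f f̄ᵀ‖₂²`. The Fubini swap is legitimate
because the fourfold integrand is a product of two `L²` functions of the four variables.
-/

open Measure
open scoped ENNReal ComplexConjugate

section SquareIntegrals

variable {α : Type*} [MeasurableSpace α] {μ : Measure α}

lemma eLpNorm_two_rpow_two_eq_ofReal_integral {E : Type*} [NormedAddCommGroup E] {u : α → E}
    (hu : Integrable (fun x => ‖u x‖ ^ 2) μ) :
    eLpNorm u 2 μ ^ (2 : ℝ) = ENNReal.ofReal (∫ x, ‖u x‖ ^ 2 ∂μ) := by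
  rw [ofReal_integral_eq_lintegral_ofReal hu (ae_of_all _ fun _ => by positivity)]
  have h := eLpNorm_nnreal_pow_eq_lintegral (f := u) (μ := μ) (p := 2) two_ne_zero
  simp only [ENNReal.coe_ofNat, NNReal.coe_ofNat] at h
  rw [h]
  congr 1 with x
  rw [← ofReal_norm, ENNReal.ofReal_rpow_of_nonneg (norm_nonneg _) zero_le_two]
  norm_cast

lemma eLpNorm_two_le_of_integral_norm_sq_le {E F : Type*} [NormedAddCommGroup E]
    [NormedAddCommGroup F] {u : α → E} {v : α → F} (hu : Integrable (fun x => ‖u x‖ ^ 2) μ)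
    (hv : Integrable (fun x => ‖v x‖ ^ 2) μ) (h : ∫ x, ‖u x‖ ^ 2 ∂μ ≤ ∫ x, ‖v x‖ ^ 2 ∂μ) :
    eLpNorm u 2 μ ≤ eLpNorm v 2 μ := by
  rw [← ENNReal.rpow_le_rpow_iff two_pos, eLpNorm_two_rpow_two_eq_ofReal_integral hu,
    eLpNorm_two_rpow_two_eq_ofReal_integral hv]
  exact ENNReal.ofReal_le_ofReal h

end SquareIntegrals

section FourfoldProduct

variable {α β γ δ : Type*} [MeasurableSpace α] [MeasurableSpace β] [MeasurableSpace γ]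
  [MeasurableSpace δ] {μa : Measure α} {μb : Measure β} {μc : Measure γ} {μd : Measure δ}
  [SFinite μb] [SFinite μc] [SFinite μd]

lemma quasiMeasurePreserving_map_fst_fst [SFinite μa] :
    QuasiMeasurePreserving (Prod.map Prod.fst Prod.fst : (α × β) × (γ × δ) → α × γ)
      ((μa.prod μb).prod (μc.prod μd)) (μa.prod μc) :=
  QuasiMeasurePreserving.prodMap quasiMeasurePreserving_fst quasiMeasurePreserving_fst

lemma quasiMeasurePreserving_map_snd_snd [SFinite μa] :
    QuasiMeasurePreserving (Prod.map Prod.snd Prod.snd : (α × β) × (γ × δ) → β × δ)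
      ((μa.prod μb).prod (μc.prod μd)) (μb.prod μd) :=
  QuasiMeasurePreserving.prodMap quasiMeasurePreserving_snd quasiMeasurePreserving_snd

lemma lintegral_mul_prod_prod_of_measurable {F : α × γ → ℝ≥0∞} {G : β × δ → ℝ≥0∞}
    (hF : Measurable F) (hG : Measurable G) :
    ∫⁻ z, F (z.1.1, z.2.1) * G (z.1.2, z.2.2) ∂((μa.prod μb).prod (μc.prod μd)) =
      (∫⁻ x, F x ∂(μa.prod μc)) * ∫⁻ y, G y ∂(μb.prod μd) := by
  have slice (q : α × β) : ∫⁻ p, F (q.1, p.1) * G (q.2, p.2) ∂(μc.prod μd) =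
      (∫⁻ s, F (q.1, s) ∂μc) * ∫⁻ u, G (q.2, u) ∂μd :=
    lintegral_prod_mul (f := fun s => F (q.1, s)) (g := fun u => G (q.2, u))
      (by fun_prop) (by fun_prop)
  rw [lintegral_prod _ (by fun_prop)]
  simp only [slice]
  rw [lintegral_prod_mul hF.lintegral_prod_right'.aemeasurable
    hG.lintegral_prod_right'.aemeasurable, lintegral_prod _ hF.aemeasurable,
    lintegral_prod _ hG.aemeasurable]

lemma lintegral_mul_prod_prod [SFinite μa] {F : α × γ → ℝ≥0∞} {G : β × δ → ℝ≥0∞}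
    (hF : AEMeasurable F (μa.prod μc)) (hG : AEMeasurable G (μb.prod μd)) :
    ∫⁻ z, F (z.1.1, z.2.1) * G (z.1.2, z.2.2) ∂((μa.prod μb).prod (μc.prod μd)) =
      (∫⁻ x, F x ∂(μa.prod μc)) * ∫⁻ y, G y ∂(μb.prod μd) := by
  have hF' : (fun z : (α × β) × (γ × δ) => F (z.1.1, z.2.1)) =ᵐ[(μa.prod μb).prod (μc.prod μd)]
      fun z => hF.mk F (z.1.1, z.2.1) :=
    quasiMeasurePreserving_map_fst_fst.ae_eq_comp hF.ae_eq_mk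
  have hG' : (fun z : (α × β) × (γ × δ) => G (z.1.2, z.2.2)) =ᵐ[(μa.prod μb).prod (μc.prod μd)]
      fun z => hG.mk G (z.1.2, z.2.2) :=
    quasiMeasurePreserving_map_snd_snd.ae_eq_comp hG.ae_eq_mk
  calc _ = ∫⁻ z, hF.mk F (z.1.1, z.2.1) * hG.mk G (z.1.2, z.2.2)
          ∂((μa.prod μb).prod (μc.prod μd)) := lintegral_congr_ae (hF'.mul hG')
    _ = (∫⁻ x, hF.mk F x ∂(μa.prod μc)) * ∫⁻ y, hG.mk G y ∂(μb.prod μd) :=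
        lintegral_mul_prod_prod_of_measurable hF.measurable_mk hG.measurable_mk
    _ = _ := by rw [lintegral_congr_ae hF.ae_eq_mk, lintegral_congr_ae hG.ae_eq_mk]

variable {𝕜 : Type*} [RCLike 𝕜]

lemma _root_.MeasureTheory.MemLp.mul_prod_prod [SFinite μa] {f : α × γ → 𝕜} {g : β × δ → 𝕜}
    (hf : MemLp f 2 (μa.prod μc)) (hg : MemLp g 2 (μb.prod μd)) :
    MemLp (fun z : (α × β) × (γ × δ) => f (z.1.1, z.2.1) * g (z.1.2, z.2.2)) 2
      ((μa.prod μb).prod (μc.prod μd)) := by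
  refine ⟨(hf.1.comp_quasiMeasurePreserving quasiMeasurePreserving_map_fst_fst).mul
    (hg.1.comp_quasiMeasurePreserving quasiMeasurePreserving_map_snd_snd), ?_⟩
  rw [eLpNorm_lt_top_iff_lintegral_rpow_enorm_lt_top two_ne_zero ENNReal.ofNat_ne_top]
  simp only [enorm_mul, ENNReal.mul_rpow_of_nonneg _ _ ENNReal.toReal_nonneg]
  rw [lintegral_mul_prod_prod (hf.1.enorm.pow_const _) (hg.1.enorm.pow_const _)]
  exact ENNReal.mul_lt_top
    (lintegral_rpow_enorm_lt_top_of_eLpNorm_lt_top two_ne_zero ENNReal.ofNat_ne_top hf.2)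
    (lintegral_rpow_enorm_lt_top_of_eLpNorm_lt_top two_ne_zero ENNReal.ofNat_ne_top hg.2)

end FourfoldProduct

section KernelProducts

variable {α : Type*} [MeasurableSpace α] {μ : Measure α} {𝕜 : Type*} [RCLike 𝕜]

/-- The kernel of the operator product `f gᵀ`; `contr1 f g` is definitionally
`mulTranspose mplus f (g ∘ Prod.swap)`. -/
noncomputable def mulTranspose (μ : Measure α) (f g : α × α → 𝕜) : α × α → 𝕜 :=
  fun q => ∫ s, f (q.1, s) * g (q.2, s) ∂μ

noncomputable def columnGram (μ : Measure α) (f : α × α → 𝕜) : α × α → 𝕜 :=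
  fun p => ∫ t, f (t, p.1) * conj (f (t, p.2)) ∂μ

lemma columnGram_conj (f : α × α → 𝕜) (p : α × α) :
    columnGram μ (fun x => conj (f x)) p = conj (columnGram μ f p) := by
  simp only [columnGram, ← integral_conj, map_mul, RCLike.conj_conj]

lemma mulTranspose_conj (f g : α × α → 𝕜) (q : α × α) :
    mulTranspose μ (fun x => conj (f x)) (fun x => conj (g x)) q = conj (mulTranspose μ f g q) := by
  simp only [mulTranspose, ← integral_conj, map_mul]

lemma integrable_mul_conj_mul [SFinite μ] {f g : α × α → 𝕜} (hf : MemLp f 2 (μ.prod μ))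
    (hg : MemLp g 2 (μ.prod μ)) :
    Integrable (fun z : (α × α) × (α × α) =>
      f (z.1.1, z.2.1) * g (z.1.2, z.2.1) * conj (f (z.1.1, z.2.2) * g (z.1.2, z.2.2)))
      ((μ.prod μ).prod (μ.prod μ)) := by
  have hP := hf.mul_prod_prod (μb := μ) (μd := μ) hg.star
  have hQ := (hg.mul_prod_prod (μb := μ) (μd := μ) hf.star).comp_measurePreserving
    (measurePreserving_swap.prod (MeasurePreserving.id (μ.prod μ)))
  refine (hP.integrable_mul hQ).congr (ae_of_all _ fun z => ?_)
  simp only [Pi.mul_apply, Function.comp_apply, Prod.map_fst, Prod.map_snd, Prod.fst_swap,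
    Prod.snd_swap, id_eq, Pi.star_apply, RCLike.star_def, map_mul]
  ring

lemma integral_mul_conj_mul_eq_norm_sq [SFinite μ] (f g : α × α → 𝕜) (q : α × α) :
    ∫ p, f (q.1, p.1) * g (q.2, p.1) * conj (f (q.1, p.2) * g (q.2, p.2)) ∂(μ.prod μ) =
      (‖mulTranspose μ f g q‖ : 𝕜) ^ 2 := by
  rw [integral_prod_mul (fun s => f (q.1, s) * g (q.2, s))
    (fun u => conj (f (q.1, u) * g (q.2, u))), integral_conj, RCLike.mul_conj]
  rfl

lemma integral_mul_conj_mul_eq_columnGram [SFinite μ] (f g : α × α → 𝕜) (p : α × α) :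
    ∫ q, f (q.1, p.1) * g (q.2, p.1) * conj (f (q.1, p.2) * g (q.2, p.2)) ∂(μ.prod μ) =
      columnGram μ f p * columnGram μ g p := by
  calc _ = ∫ q, f (q.1, p.1) * conj (f (q.1, p.2)) * (g (q.2, p.1) * conj (g (q.2, p.2)))
        ∂(μ.prod μ) := integral_congr_ae (ae_of_all _ fun q => by rw [map_mul]; ring)
    _ = _ := integral_prod_mul (fun t => f (t, p.1) * conj (f (t, p.2)))
        (fun t => g (t, p.1) * conj (g (t, p.2)))

lemma integrable_norm_sq_mulTranspose [SFinite μ] {f g : α × α → 𝕜}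
    (hf : MemLp f 2 (μ.prod μ)) (hg : MemLp g 2 (μ.prod μ)) :
    Integrable (fun q => ‖mulTranspose μ f g q‖ ^ 2) (μ.prod μ) := by
  refine (integrable_mul_conj_mul hf hg).integral_prod_left.re.congr (ae_of_all _ fun q => ?_)
  dsimp only
  rw [integral_mul_conj_mul_eq_norm_sq, ← RCLike.ofReal_pow, RCLike.ofReal_re]

lemma integral_norm_sq_mulTranspose [SFinite μ] {f g : α × α → 𝕜}
    (hf : MemLp f 2 (μ.prod μ)) (hg : MemLp g 2 (μ.prod μ)) :
    ((∫ q, ‖mulTranspose μ f g q‖ ^ 2 ∂(μ.prod μ) : ℝ) : 𝕜) =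
      ∫ p, columnGram μ f p * columnGram μ g p ∂(μ.prod μ) := by
  calc ((∫ q, ‖mulTranspose μ f g q‖ ^ 2 ∂(μ.prod μ) : ℝ) : 𝕜)
      = ∫ q, (‖mulTranspose μ f g q‖ : 𝕜) ^ 2 ∂(μ.prod μ) := by
        simp only [← integral_ofReal, RCLike.ofReal_pow]
    _ = ∫ q, ∫ p, f (q.1, p.1) * g (q.2, p.1) * conj (f (q.1, p.2) * g (q.2, p.2)) ∂(μ.prod μ)
          ∂(μ.prod μ) :=
        integral_congr_ae (ae_of_all _ fun q => (integral_mul_conj_mul_eq_norm_sq f g q).symm)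
    _ = ∫ p, ∫ q, f (q.1, p.1) * g (q.2, p.1) * conj (f (q.1, p.2) * g (q.2, p.2)) ∂(μ.prod μ)
          ∂(μ.prod μ) :=
        integral_integral_swap (integrable_mul_conj_mul hf hg)
    _ = ∫ p, columnGram μ f p * columnGram μ g p ∂(μ.prod μ) :=
        integral_congr_ae (ae_of_all _ fun p => integral_mul_conj_mul_eq_columnGram f g p)

lemma eLpNorm_mulTranspose_self_le [SFinite μ] {f : α × α → 𝕜} (hf : MemLp f 2 (μ.prod μ)) :
    eLpNorm (mulTranspose μ f f) 2 (μ.prod μ) ≤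
      eLpNorm (mulTranspose μ f (fun x => conj (f x))) 2 (μ.prod μ) := by
  have hfc : MemLp (fun x => conj (f x)) 2 (μ.prod μ) := hf.star
  refine eLpNorm_two_le_of_integral_norm_sq_le (integrable_norm_sq_mulTranspose hf hf)
    (integrable_norm_sq_mulTranspose hf hfc) ?_
  calc ∫ q, ‖mulTranspose μ f f q‖ ^ 2 ∂(μ.prod μ)
      = RCLike.re (∫ p, columnGram μ f p * columnGram μ f p ∂(μ.prod μ)) := by
        rw [← integral_norm_sq_mulTranspose hf hf, RCLike.ofReal_re]
    _ ≤ ∫ p, ‖columnGram μ f p * columnGram μ f p‖ ∂(μ.prod μ) :=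
        (RCLike.re_le_norm _).trans (norm_integral_le_integral_norm _)
    _ = RCLike.re (∫ p, columnGram μ f p * conj (columnGram μ f p) ∂(μ.prod μ)) := by
        simp only [RCLike.mul_conj, ← sq, norm_pow, ← RCLike.ofReal_pow, integral_ofReal,
          RCLike.ofReal_re]
    _ = ∫ q, ‖mulTranspose μ f (fun x => conj (f x)) q‖ ^ 2 ∂(μ.prod μ) := by
        simp only [← columnGram_conj, ← integral_norm_sq_mulTranspose hf hfc, RCLike.ofReal_re]

lemma mulTranspose_congr_ae_right [SFinite μ] {f g g' : α × α → 𝕜} (h : g =ᵐ[μ.prod μ] g') :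
    mulTranspose μ f g =ᵐ[μ.prod μ] mulTranspose μ f g' := by
  have h' : ∀ᵐ t ∂μ, ∀ᵐ s ∂μ, g (t, s) = g' (t, s) := ae_ae_of_ae_prod h
  filter_upwards [quasiMeasurePreserving_snd.ae h'] with q hq
  exact integral_congr_ae (hq.mono fun s hs => by simp only [hs])

lemma norm_mulTranspose_conj (f g : α × α → 𝕜) (q : α × α) :
    ‖mulTranspose μ (fun x => conj (f x)) (fun x => conj (g x)) q‖ = ‖mulTranspose μ f g q‖ := by
  rw [mulTranspose_conj, RCLike.norm_conj]

end KernelProducts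

instance : SFinite mplus := by unfold mplus; infer_instance

theorem stmt19 (f : ℝ × ℝ → ℂ) (hf : MemLp f 2 m2)
    (hmirror : f =ᵐ[m2] fun t => starRingEnd ℂ (f (t.2, t.1))) :
    eLpNorm (contr1 f (fun t => starRingEnd ℂ (f t))) 2 m2 =
      eLpNorm (contr1 (fun t => starRingEnd ℂ (f t)) f) 2 m2 ∧
    eLpNorm (contr1 f (fun t => starRingEnd ℂ (f t))) 2 m2 ≤ eLpNorm (contr1 f f) 2 m2 := by
  have hswap : (fun t : ℝ × ℝ => f (t.2, t.1)) =ᵐ[m2] fun t => conj (f t) :=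
    measurePreserving_swap.quasiMeasurePreserving.ae_eq_comp hmirror
  have h₁ : contr1 f (fun t => conj (f t)) =ᵐ[m2] mulTranspose mplus f f :=
    mulTranspose_congr_ae_right hmirror.symm
  have h₂ : contr1 (fun t => conj (f t)) f =ᵐ[m2]
      mulTranspose mplus (fun t => conj (f t)) (fun t => conj (f t)) :=
    mulTranspose_congr_ae_right (f := fun t => conj (f t)) hswap
  have h₃ : contr1 f f =ᵐ[m2] mulTranspose mplus f (fun t => conj (f t)) :=
    mulTranspose_congr_ae_right hswap
  rw [eLpNorm_congr_ae h₁, eLpNorm_congr_ae h₂, eLpNorm_congr_ae h₃]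
  exact ⟨eLpNorm_congr_norm_ae (ae_of_all _ fun q => (norm_mulTranspose_conj f f q).symm),
    eLpNorm_mulTranspose_self_le hf⟩
end
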